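/- arXiv:math/9802122 — 12 statements merged into one kernel-verified Lean document; each statement's English description precedes it below -/
import Mathlib

section
/- If s and t are relatively prime positive integers, then Φ_s(x^t) = ∏_{r | t} Φ_{rs}(x), where the product is over all positive divisors r of t and Φ_n denotes the n-th cyclotomic polynomial. -/
open Polynomial Finset

/-!
Both sides are multiplicative over the divisors of `s`: for every `d ∣ s` the product of
`Φ_a(X^t)` over `a ∣ d` is `X^(dt) - 1`, and, since `d` and `t` are coprime, the divisors of `dt`
are exactly the products `r * a` with `r ∣ t`, `a ∣ d`, so the product of the right-hand sides is
`X^(dt) - 1` as well. Two families whose divisor products agree coincide, by strong induction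
and cancellation of the (monic) product over the proper divisors.
-/

theorem Nat.Coprime.prod_divisors_mul {M : Type*} [CommMonoid M] {m n : ℕ} (hmn : m.Coprime n)
    (f : ℕ → M) :
    ∏ d ∈ (m * n).divisors, f d = ∏ a ∈ m.divisors, ∏ b ∈ n.divisors, f (a * b) := by
  rw [Nat.divisors_mul, Finset.mul_def, prod_image hmn.mul_injOn_divisors, prod_product]

theorem Nat.eq_of_prod_divisors_eq {M : Type*} [CommMonoid M] {f g : ℕ → M} {n : ℕ}
    (hn : n ≠ 0) (hg : ∀ d ∈ n.divisors, IsRegular (g d))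
    (h : ∀ d ∈ n.divisors, ∏ e ∈ d.divisors, f e = ∏ e ∈ d.divisors, g e) : f n = g n := by
  induction n using Nat.strong_induction_on with
  | _ n ih =>
  have hproper : ∀ d ∈ n.properDivisors, f d = g d := by
    intro d hd
    obtain ⟨hdn, hlt⟩ := Nat.mem_properDivisors.mp hd
    have hsub := Nat.divisors_subset_of_dvd hn hdn
    exact ih d hlt (Nat.pos_of_dvd_of_pos hdn (Nat.pos_of_ne_zero hn)).ne'
      (fun e he => hg e (hsub he)) (fun e he => h e (hsub he))
  have hprod := h n (Nat.mem_divisors_self n hn)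
  rw [← Nat.cons_self_properDivisors hn, prod_cons, prod_cons, prod_congr rfl hproper] at hprod
  exact (IsRegular.prod fun d hd => hg d (Nat.mem_divisors.mpr
    ⟨(Nat.mem_properDivisors.mp hd).1, hn⟩)).right hprod

theorem prod_cyclotomic_comp_X_pow (R : Type*) [CommRing R] {n : ℕ} (hn : 0 < n) (t : ℕ) :
    ∏ a ∈ n.divisors, (cyclotomic a R).comp (X ^ t) = X ^ (n * t) - 1 := by
  rw [← Polynomial.prod_comp, prod_cyclotomic_eq_X_pow_sub_one hn, sub_comp, pow_comp, X_comp,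
    one_comp, ← pow_mul, mul_comm]

theorem cyclotomic_comp_X_pow (s t : ℕ) (hs : 0 < s) (ht : 0 < t)
    (hst : Nat.Coprime s t) :
    (cyclotomic s ℤ).comp (X ^ t) = ∏ r ∈ t.divisors, cyclotomic (r * s) ℤ := by
  refine Nat.eq_of_prod_divisors_eq (f := fun a => (cyclotomic a ℤ).comp (X ^ t))
    (g := fun a => ∏ r ∈ t.divisors, cyclotomic (r * a) ℤ) hs.ne'
    (fun a _ => (monic_prod_of_monic _ _ fun r _ => cyclotomic.monic _ ℤ).isRegular)
    (fun d hd => ?_)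
  have hd0 : 0 < d := Nat.pos_of_mem_divisors hd
  have hdt : d.Coprime t := hst.coprime_dvd_left (Nat.dvd_of_mem_divisors hd)
  calc ∏ a ∈ d.divisors, (cyclotomic a ℤ).comp (X ^ t)
      = X ^ (t * d) - 1 := by rw [prod_cyclotomic_comp_X_pow ℤ hd0, mul_comm]
    _ = ∏ e ∈ (t * d).divisors, cyclotomic e ℤ :=
        (prod_cyclotomic_eq_X_pow_sub_one (Nat.mul_pos ht hd0) ℤ).symm
    _ = ∏ a ∈ d.divisors, ∏ r ∈ t.divisors, cyclotomic (r * a) ℤ := by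
        rw [hdt.symm.prod_divisors_mul, prod_comm]
end

section
/- Let p be prime, let Ā(x) be a polynomial with integer coefficients, and let A(x) = Ā(x^p). Then for a positive integer t, Φ_t(x) divides A(x) if and only if t = ps for some s with Φ_s(x) dividing Ā(x), or t = s for some s not divisible by p with Φ_s(x) dividing Ā(x). -/
open Polynomial

private lemma cyc_dvd_iff_aeval {n : ℕ} (hn : 0 < n) {ζ : ℂ} (hζ : IsPrimitiveRoot ζ n)
    (q : Polynomial ℤ) : cyclotomic n ℤ ∣ q ↔ aeval ζ q = 0 := by
  constructor
  · rintro ⟨c, rfl⟩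
    have hroot : aeval ζ (cyclotomic n ℤ) = 0 := by
      rw [aeval_def, eval₂_eq_eval_map, map_cyclotomic]
      exact hζ.isRoot_cyclotomic hn
    simp [hroot]
  · intro h
    have hQ : aeval ζ (q.map (algebraMap ℤ ℚ)) = 0 := by
      rwa [aeval_map_algebraMap]
    have hdvd : cyclotomic n ℚ ∣ q.map (algebraMap ℤ ℚ) := by
      rw [cyclotomic_eq_minpoly_rat hζ hn]
      exact minpoly.dvd ℚ ζ hQ
    rw [← map_cyclotomic_int n ℚ] at hdvd
    exact (map_dvd_map (algebraMap ℤ ℚ) (algebraMap ℤ ℚ).injective_int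
      (cyclotomic.monic n ℤ)).mp hdvd

theorem cyclotomic_dvd_comp_X_pow_prime (p : ℕ) (hp : p.Prime)
    (Abar : Polynomial ℤ) (A : Polynomial ℤ) (hA : A = Abar.comp (X ^ p))
    (t : ℕ) (ht : 0 < t) :
    cyclotomic t ℤ ∣ A ↔
      ((∃ s : ℕ, t = p * s ∧ cyclotomic s ℤ ∣ Abar) ∨
       (¬ p ∣ t ∧ cyclotomic t ℤ ∣ Abar)) := by
  subst hA
  set ζ : ℂ := Complex.exp (2 * Real.pi * Complex.I / t) with hζdef
  have hζ : IsPrimitiveRoot ζ t := Complex.isPrimitiveRoot_exp t ht.ne'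
  have hmain : cyclotomic t ℤ ∣ Abar.comp (X ^ p) ↔ aeval (ζ ^ p) Abar = 0 := by
    rw [cyc_dvd_iff_aeval ht hζ, aeval_comp]
    simp
  by_cases hpt : p ∣ t
  · obtain ⟨s, rfl⟩ := hpt
    have hs : 0 < s := by
      rcases Nat.eq_zero_or_pos s with h | h
      · simp [h] at ht
      · exact h
    have hζp : IsPrimitiveRoot (ζ ^ p) s := hζ.pow ht rfl
    rw [hmain, ← cyc_dvd_iff_aeval hs hζp]
    constructor
    · intro h; exact Or.inl ⟨s, rfl, h⟩
    · rintro (⟨s', hs', h⟩ | ⟨hnd, _⟩)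
      · have : s' = s := (Nat.eq_of_mul_eq_mul_left hp.pos hs').symm
        exact this ▸ h
      · exact absurd ⟨s, rfl⟩ hnd
  · have hcop : p.Coprime t := (Nat.Prime.coprime_iff_not_dvd hp).mpr hpt
    have hζp : IsPrimitiveRoot (ζ ^ p) t := hζ.pow_of_coprime p hcop
    rw [hmain, ← cyc_dvd_iff_aeval ht hζp]
    constructor
    · intro h; exact Or.inr ⟨hpt, h⟩
    · rintro (⟨s, hs, _⟩ | ⟨_, h⟩)
      · exact absurd ⟨s, hs⟩ hpt
      · exact h
end

section
/- Let A and B be finite multisets of nonnegative integers with n = A(1)·B(1) = (#A)(#B). Then A(x)·B(x) ≡ 1 + x + ⋯ + x^{n−1} (mod x^n − 1) if and only if n = A(1)·B(1) and for every divisor t > 1 of n, the cyclotomic polynomial Φ_t(x) divides A(x) or divides B(x). -/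
/-!
Over `ℤ`, `X ^ n - 1` is the product of the pairwise non-associated irreducibles `Φ_d`, `d ∣ n`,
so it divides `F = A(x) B(x) - (1 + x + ⋯ + x^{n-1})` iff every `Φ_d` does. For `d > 1`, `Φ_d`
divides the geometric sum and is prime, so `Φ_d ∣ F` iff `Φ_d` divides `A(x)` or `B(x)`; for
`d = 1`, `Φ_1 = x - 1` divides `F` iff `F(1) = 0`, i.e. `A(1) B(1) = n`.
-/

open Polynomial

/-- The polynomial of a finite multiset of nonnegative integers. -/
noncomputable def multisetPoly (A : Multiset ℕ) : Polynomial ℤ :=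
  (A.map fun a => (X : Polynomial ℤ) ^ a).sum

lemma multisetPoly_eval_one (A : Multiset ℕ) :
    (multisetPoly A).eval 1 = Multiset.card A := by
  simp [multisetPoly, eval_multisetSum]

lemma multisetPoly_eq_zero_iff {A : Multiset ℕ} : multisetPoly A = 0 ↔ A = 0 := by
  refine ⟨fun h => Multiset.card_eq_zero.1 ?_, fun h => by simp [h, multisetPoly]⟩
  simpa [h, eq_comm] using multisetPoly_eval_one A

lemma Nat.forall_mem_divisors_iff_one_and_one_lt {n : ℕ} (hn : n ≠ 0) (p : ℕ → Prop) :
    (∀ d ∈ n.divisors, p d) ↔ p 1 ∧ ∀ t, t ∣ n → 1 < t → p t := by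
  refine ⟨fun h => ⟨h 1 (one_mem_divisors.2 hn), fun t ht _ => h t (mem_divisors.2 ⟨ht, hn⟩)⟩,
    fun ⟨h1, h⟩ d hd => ?_⟩
  obtain rfl | hd1 := eq_or_ne d 1
  · exact h1
  · exact h d (dvd_of_mem_divisors hd) (lt_of_le_of_ne (pos_of_mem_divisors hd) hd1.symm)

namespace Polynomial

lemma cyclotomic_isRelPrime {m n : ℕ} (hm : 0 < m) (hn : 0 < n) (hmn : m ≠ n) :
    IsRelPrime (cyclotomic m ℤ) (cyclotomic n ℤ) :=
  (cyclotomic.irreducible hm).isRelPrime_iff_not_dvd.2 fun hdvd => hmn <| cyclotomic_injective <|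
    eq_of_monic_of_associated (cyclotomic.monic m ℤ) (cyclotomic.monic n ℤ) <|
      (cyclotomic.irreducible hm).associated_of_dvd (cyclotomic.irreducible hn) hdvd

lemma X_pow_sub_one_dvd_iff_forall_cyclotomic_dvd {n : ℕ} (hn : 0 < n) {F : ℤ[X]} :
    X ^ n - 1 ∣ F ↔ ∀ d ∈ n.divisors, cyclotomic d ℤ ∣ F := by
  rw [← prod_cyclotomic_eq_X_pow_sub_one hn]
  refine ⟨fun h d hd => (Finset.dvd_prod_of_mem (cyclotomic · ℤ) hd).trans h, fun h => ?_⟩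
  refine Finset.prod_dvd_of_isRelPrime ?_ h
  intro d hd e he hde
  exact cyclotomic_isRelPrime (Nat.pos_of_mem_divisors hd) (Nat.pos_of_mem_divisors he) hde

lemma cyclotomic_one_dvd_sub_geom_sum_iff {R : Type*} [CommRing R] (P : R[X]) (n : ℕ) :
    cyclotomic 1 R ∣ P - ∑ i ∈ Finset.range n, X ^ i ↔ P.eval 1 = n := by
  rw [cyclotomic_one, ← C_1, dvd_iff_isRoot, IsRoot, eval_sub, sub_eq_zero]
  simp [eval_finsetSum]

lemma cyclotomic_dvd_sub_geom_sum_iff {R : Type*} [Ring R] (P : R[X]) {d n : ℕ} (hdn : d ∣ n)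
    (hd : d ≠ 1) : cyclotomic d R ∣ P - ∑ i ∈ Finset.range n, X ^ i ↔ cyclotomic d R ∣ P :=
  dvd_sub_left (cyclotomic_dvd_geom_sum_of_dvd R hdn hd)

end Polynomial

theorem poly_congr_iff_cyclotomic_divisors_general (A B : Multiset ℕ)
    (n : ℕ) :
    ((X ^ n - 1 : Polynomial ℤ) ∣
        (multisetPoly A * multisetPoly B - ∑ i ∈ Finset.range n, X ^ i)) ↔
      ((n : ℤ) = (multisetPoly A).eval 1 * (multisetPoly B).eval 1 ∧
        ∀ t : ℕ, t ∣ n → 1 < t →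
          cyclotomic t ℤ ∣ multisetPoly A ∨ cyclotomic t ℤ ∣ multisetPoly B) := by
  rcases Nat.eq_zero_or_pos n with rfl | hpos
  · simp only [pow_zero, sub_self, zero_dvd_iff, Finset.range_zero, Finset.sum_empty, sub_zero,
      mul_eq_zero, multisetPoly_eq_zero_iff, multisetPoly_eval_one, Nat.cast_zero,
      eq_comm (a := (0 : ℤ)), Nat.cast_eq_zero, Multiset.card_eq_zero, iff_self_and]
    rintro (rfl | rfl) t - - <;> simp [multisetPoly]
  rw [X_pow_sub_one_dvd_iff_forall_cyclotomic_dvd hpos,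
    Nat.forall_mem_divisors_iff_one_and_one_lt hpos.ne', cyclotomic_one_dvd_sub_geom_sum_iff,
    eval_mul, eq_comm]
  refine and_congr_right fun _ => forall₂_congr fun t ht => forall_congr' fun h1t => ?_
  rw [cyclotomic_dvd_sub_geom_sum_iff _ ht h1t.ne',
    (cyclotomic.irreducible (by omega)).prime.dvd_mul]

theorem poly_congr_iff_cyclotomic_divisors (A B : Multiset ℕ)
    (n : ℕ) (hn : n = Multiset.card A * Multiset.card B) :
    ((X ^ n - 1 : Polynomial ℤ) ∣
        (multisetPoly A * multisetPoly B - ∑ i ∈ Finset.range n, X ^ i)) ↔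
      ((n : ℤ) = (multisetPoly A).eval 1 * (multisetPoly B).eval 1 ∧
        ∀ t : ℕ, t ∣ n → 1 < t →
          cyclotomic t ℤ ∣ multisetPoly A ∨ cyclotomic t ℤ ∣ multisetPoly B) :=
  poly_congr_iff_cyclotomic_divisors_general A B n
end

section
/- If A is a finite nonempty set of integers and A ⊕ C = ℤ is a tiling (every integer has a unique representation a + c with a ∈ A, c ∈ C), then C is periodic: there exists n ≥ 1 and a finite set B such that C = B ⊕ nℤ and n = (#A)(#B). -/
/-- `A ⊕ C = ℤ`: every integer has a unique representation `a + c` with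
`a ∈ A`, `c ∈ C`. -/
def IsTiling (A : Set ℤ) (C : Set ℤ) : Prop :=
  ∀ z : ℤ, ∃! p : ℤ × ℤ, p.1 ∈ A ∧ p.2 ∈ C ∧ p.1 + p.2 = z

/-!
Let `m` and `M` be the least and greatest elements of `A` and `d = M - m`. For `x ∈ C` the pair
`(m, x)` represents `x + m`, and any other representation would use a point of `C` in `[x - d, x)`;
hence `C ∩ [x - d, x)` decides whether `x ∈ C`, and symmetrically (using `M`) so does
`C ∩ (x, x + d]`. There are only finitely many patterns `C ∩ [t, t + d) - t`, so two windows
`t < t'` carry the same pattern, and then, by determination in both directions, so do all the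
windows `t + k`, `t' + k`: `C` is periodic with period `p = t' - t`. With `B = C ∩ [0, p)` we get
`C = B ⊕ pℤ`, so `(a, b) ↦ a + b mod p` is a bijection `A × B → ℤ/pℤ` and `p = #A · #B`.
-/

open Function

def WindowsAgree (S : Set ℤ) (d s t : ℤ) : Prop :=
  ∀ j ∈ Set.Ico 0 d, s + j ∈ S ↔ t + j ∈ S

theorem exists_lt_windowsAgree (S : Set ℤ) (d : ℤ) : ∃ s t, s < t ∧ WindowsAgree S d s t := by
  obtain ⟨s, t, hne, heq⟩ :=
    Finite.exists_ne_map_eq_of_infinite fun (t : ℤ) (j : Set.Ico 0 d) => t + j ∈ S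
  have agree : WindowsAgree S d s t := fun j hj => iff_of_eq (congrFun heq ⟨j, hj⟩)
  rcases hne.lt_or_gt with hst | hts
  · exact ⟨s, t, hst, agree⟩
  · exact ⟨t, s, hts, fun j hj => (agree j hj).symm⟩

section WindowsAgree

variable {S : Set ℤ} {d s t : ℤ}

theorem WindowsAgree.add_one (hfwd : WindowsAgree S d s t → (s + d ∈ S ↔ t + d ∈ S))
    (h : WindowsAgree S d s t) : WindowsAgree S d (s + 1) (t + 1) := by
  intro j ⟨hj0, hjd⟩
  rcases lt_or_eq_of_le (show j + 1 ≤ d by omega) with hj | hj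
  · simpa only [add_assoc, add_comm 1 j] using h (j + 1) ⟨by omega, hj⟩
  · simpa only [add_assoc, add_comm 1 j, hj] using hfwd h

theorem WindowsAgree.sub_one (hbwd : WindowsAgree S d s t → (s - 1 ∈ S ↔ t - 1 ∈ S))
    (h : WindowsAgree S d s t) : WindowsAgree S d (s - 1) (t - 1) := by
  intro j ⟨hj0, hjd⟩
  rcases eq_or_lt_of_le hj0 with hj | hj
  · simpa only [← hj, add_zero] using hbwd h
  · simpa only [sub_add_eq_add_sub, add_sub_assoc] using h (j - 1) ⟨by omega, by omega⟩

theorem exists_pos_periodic_of_windowsAgree_imp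
    (hfwd : ∀ s t, WindowsAgree S d s t → (s + d ∈ S ↔ t + d ∈ S))
    (hbwd : ∀ s t, WindowsAgree S d s t → (s - 1 ∈ S ↔ t - 1 ∈ S)) :
    ∃ p : ℤ, 0 < p ∧ Periodic (· ∈ S) p := by
  obtain ⟨s, t, hst, h⟩ := exists_lt_windowsAgree S d
  have shifted (k : ℤ) : WindowsAgree S d (s + k) (t + k) := by
    induction k using Int.induction_on with
    | zero => simpa using h
    | succ k ih => simpa only [add_assoc] using ih.add_one (hfwd _ _)
    | pred k ih => simpa only [add_sub_assoc'] using ih.sub_one (hbwd _ _)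
  refine ⟨t - s, by omega, fun x => propext ?_⟩
  convert (hfwd _ _ (shifted (x - s - d))).symm using 2 <;> ring

end WindowsAgree

section Periodic

variable {C : Set ℤ} {p : ℤ}

theorem Function.Periodic.map_emod {α : Type*} {f : ℤ → α} (hf : Periodic f p) (x : ℤ) :
    f (x % p) = f x := by
  simpa only [Int.cast_id, Int.emod_add_ediv_mul] using (hf.int_mul (x / p) (x % p)).symm

theorem Function.Periodic.add_mul_mem (hC : Periodic (· ∈ C) p) {b : ℤ} (hb : b ∈ C) (z : ℤ) :
    b + p * z ∈ C := by
  simpa only [Int.cast_id, mul_comm z p, eq_iff_iff, iff_true, hb] using hC.int_mul z b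

theorem Function.Periodic.eq_setOf_add_mul [DecidablePred (· ∈ C)]
    (hC : Periodic (· ∈ C) p) (hp : 0 < p) :
    C = {c | ∃ b ∈ (Finset.Ico 0 p).filter (· ∈ C), ∃ z : ℤ, c = b + p * z} := by
  ext c
  simp only [Set.mem_ofPred_eq, Finset.mem_filter, Finset.mem_Ico]
  constructor
  · intro hc
    refine ⟨c % p, ⟨⟨Int.emod_nonneg c hp.ne', Int.emod_lt_of_pos c hp⟩, ?_⟩, c / p, ?_⟩
    · rwa [hC.map_emod]
    · exact (Int.emod_add_mul_ediv c p).symm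
  · rintro ⟨b, ⟨-, hb⟩, z, rfl⟩
    exact hC.add_mul_mem hb z

end Periodic

namespace IsTiling

variable {A C : Set ℤ}

theorem exists_add_eq (h : IsTiling A C) (z : ℤ) : ∃ a ∈ A, ∃ c ∈ C, a + c = z :=
  let ⟨⟨a, c⟩, ⟨ha, hc, hz⟩, _⟩ := h z
  ⟨a, ha, c, hc, hz⟩

theorem eq_of_add_eq (h : IsTiling A C) {a a' c c' : ℤ} (ha : a ∈ A) (ha' : a' ∈ A)
    (hc : c ∈ C) (hc' : c' ∈ C) (heq : a + c = a' + c') : a = a' ∧ c = c' :=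
  Prod.ext_iff.mp <|
    (h (a' + c')).unique (y₁ := (a, c)) (y₂ := (a', c')) ⟨ha, hc, heq⟩ ⟨ha', hc', rfl⟩

theorem mem_iff_mem_of_agree (h : IsTiling A C) {a x y : ℤ} (ha : a ∈ A)
    (hxy : ∀ i ≠ 0, a + i ∈ A → (x - i ∈ C ↔ y - i ∈ C)) : x ∈ C ↔ y ∈ C := by
  suffices key : ∀ x y, (∀ i ≠ 0, a + i ∈ A → (x - i ∈ C ↔ y - i ∈ C)) → x ∈ C → y ∈ C from
    ⟨key x y hxy, key y x fun i hi hai => (hxy i hi hai).symm⟩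
  intro x y hxy hx
  obtain ⟨a', ha', c, hc, hsum⟩ := h.exists_add_eq (y + a)
  by_cases hcy : c = y
  · exact hcy ▸ hc
  have hi : y - c ≠ 0 := sub_ne_zero.mpr (Ne.symm hcy)
  have hai : a + (y - c) ∈ A := by convert ha' using 1; omega
  have hxc : x - (y - c) ∈ C := (hxy _ hi hai).mpr (by rwa [sub_sub_cancel])
  have := h.eq_of_add_eq hai ha hxc hx (by ring)
  omega

theorem add_mem_iff_of_windowsAgree (h : IsTiling A C) {a d s t : ℤ} (ha : a ∈ A)
    (hA : ∀ b ∈ A, a ≤ b ∧ b ≤ a + d) (hst : WindowsAgree C d s t) :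
    s + d ∈ C ↔ t + d ∈ C :=
  h.mem_iff_mem_of_agree ha fun i hi hai => by
    have := hA _ hai
    simpa only [add_sub_assoc] using hst (d - i) ⟨by omega, by omega⟩

theorem sub_one_mem_iff_of_windowsAgree (h : IsTiling A C) {a d s t : ℤ} (ha : a ∈ A)
    (hA : ∀ b ∈ A, a - d ≤ b ∧ b ≤ a) (hst : WindowsAgree C d s t) :
    s - 1 ∈ C ↔ t - 1 ∈ C :=
  h.mem_iff_mem_of_agree ha fun i hi hai => by
    have := hA _ hai
    simpa only [← add_sub_assoc, ← sub_eq_add_neg] using hst (-1 - i) ⟨by omega, by omega⟩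

theorem exists_pos_periodic {A : Finset ℤ} (h : IsTiling A C) (hA : A.Nonempty) :
    ∃ p : ℤ, 0 < p ∧ Periodic (· ∈ C) p := by
  exact exists_pos_periodic_of_windowsAgree_imp (d := A.max' hA - A.min' hA)
    (fun _ _ => h.add_mem_iff_of_windowsAgree (A.min'_mem hA) fun b hb =>
      ⟨A.min'_le b hb, by linarith [A.le_max' b hb]⟩)
    (fun _ _ => h.sub_one_mem_iff_of_windowsAgree (A.max'_mem hA) fun b hb =>
      ⟨by linarith [A.min'_le b hb], A.le_max' b hb⟩)

theorem card_mul_card_filter_Ico {A : Finset ℤ} {p : ℤ} [DecidablePred (· ∈ C)]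
    (h : IsTiling A C) (hC : Periodic (· ∈ C) p) (hp : 0 < p) :
    ((A.card * ((Finset.Ico 0 p).filter (· ∈ C)).card : ℕ) : ℤ) = p := by
  rw [← Finset.card_product]
  suffices (A ×ˢ _).card = (Finset.Ico 0 p).card by
    rw [this, Int.card_Ico, sub_zero, Int.toNat_of_nonneg hp.le]
  have hemod (x : ℤ) : x % p ∈ Finset.Ico 0 p :=
    Finset.mem_Ico.mpr ⟨Int.emod_nonneg x hp.ne', Int.emod_lt_of_pos x hp⟩
  refine Finset.card_nbij (fun q => (q.1 + q.2) % p) (fun q _ => hemod _) ?_ ?_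
  · rintro ⟨a, b⟩ hab ⟨a', b'⟩ hab' heq
    simp only [Finset.coe_product, Set.mem_prod, Finset.mem_coe, Finset.mem_filter,
      Finset.mem_Ico] at hab hab'
    obtain ⟨ha, ⟨hb0, hbp⟩, hb⟩ := hab
    obtain ⟨ha', ⟨hb0', hbp'⟩, hb'⟩ := hab'
    obtain ⟨m, hm⟩ := Int.ModEq.dvd heq
    obtain ⟨rfl, rfl⟩ := h.eq_of_add_eq ha' ha hb' (hC.add_mul_mem hb m) (by omega)
    rw [← Int.emod_eq_of_lt hb0' hbp', Int.add_mul_emod_self_left, Int.emod_eq_of_lt hb0 hbp]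
  · intro r hr
    obtain ⟨a, ha, c, hc, rfl⟩ := h.exists_add_eq r
    refine ⟨(a, c % p), ?_, ?_⟩
    · simp only [Finset.coe_product, Set.mem_prod, Finset.mem_coe, Finset.mem_filter]
      exact ⟨ha, hemod c, by rwa [hC.map_emod]⟩
    · simp only [Finset.mem_coe, Finset.mem_Ico] at hr
      simp only [Int.add_emod_emod, Int.emod_eq_of_lt hr.1 hr.2]

end IsTiling

theorem tiling_periodic (A : Finset ℤ) (hA : A.Nonempty) (C : Set ℤ)
    (h : IsTiling (↑A) C) :
    ∃ n : ℕ, 1 ≤ n ∧ ∃ B : Finset ℤ,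
      (C = {c : ℤ | ∃ b ∈ B, ∃ z : ℤ, c = b + (n : ℤ) * z}) ∧
      n = A.card * B.card := by
  classical
  obtain ⟨p, hp, hC⟩ := h.exists_pos_periodic hA
  have hcard := h.card_mul_card_filter_Ico hC hp
  refine ⟨p.toNat, by omega, (Finset.Ico 0 p).filter (· ∈ C), ?_, by omega⟩
  rw [Int.toNat_of_nonneg hp.le]
  exact hC.eq_setOf_add_mul hp
end

section
/- Let p be prime and Ā a finite set of nonnegative integers with polynomial Ā(x). Then the set S_{pĀ} of prime powers s with Φ_s(x) dividing Ā(x^p) equals {p^{α+1} : p^α ∈ S_Ā} ∪ {q^β ∈ S_Ā : q prime, q ≠ p}. -/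
open Polynomial

/-- The polynomial `∑_{a ∈ A} x^a` of a finite set of nonnegative integers. -/
noncomputable def setPoly (A : Finset ℕ) : Polynomial ℤ :=
  ∑ a ∈ A, X ^ a

/-!
Φ_s divides a polynomial `f` exactly when `f` vanishes at a primitive `s`-th root of unity `ζ`,
and `f(x^p)` vanishes at `ζ` exactly when `f` vanishes at `ζ^p`. For `s` prime to `p`, `ζ^p` is
again a primitive `s`-th root; for `s = p · p^α` it is a primitive `p^α`-th root. The case `α = 0`
is excluded because `Ā(1) = |Ā| ≠ 0`.
-/

namespace Polynomial

theorem cyclotomic_dvd_iff_aeval_eq_zero {n : ℕ} (hn : 0 < n) {ζ : ℂ} (hζ : IsPrimitiveRoot ζ n)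
    (f : ℤ[X]) : cyclotomic n ℤ ∣ f ↔ aeval ζ f = 0 := by
  rw [cyclotomic_eq_minpoly hζ hn]
  exact (minpoly.isIntegrallyClosed_dvd_iff (hζ.isIntegral hn) f).symm

theorem cyclotomic_dvd_comp_X_pow_iff_of_coprime {n p : ℕ} (hn : 0 < n) (hpn : p.Coprime n)
    (f : ℤ[X]) : cyclotomic n ℤ ∣ f.comp (X ^ p) ↔ cyclotomic n ℤ ∣ f := by
  obtain ⟨ζ, hζ⟩ : ∃ ζ : ℂ, IsPrimitiveRoot ζ n := ⟨_, Complex.isPrimitiveRoot_exp n hn.ne'⟩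
  rw [cyclotomic_dvd_iff_aeval_eq_zero hn hζ, aeval_comp, cyclotomic_dvd_iff_aeval_eq_zero hn
    (hζ.pow_of_coprime p hpn)]
  simp

theorem cyclotomic_mul_dvd_comp_X_pow_iff {n p : ℕ} (hp : 0 < p) (hn : 0 < n) (f : ℤ[X]) :
    cyclotomic (p * n) ℤ ∣ f.comp (X ^ p) ↔ cyclotomic n ℤ ∣ f := by
  have hpn : 0 < p * n := Nat.mul_pos hp hn
  obtain ⟨ζ, hζ⟩ : ∃ ζ : ℂ, IsPrimitiveRoot ζ (p * n) :=
    ⟨_, Complex.isPrimitiveRoot_exp _ hpn.ne'⟩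
  rw [cyclotomic_dvd_iff_aeval_eq_zero hpn hζ, aeval_comp, cyclotomic_dvd_iff_aeval_eq_zero hn
    (hζ.pow hpn rfl)]
  simp

end Polynomial

theorem eval_one_setPoly (A : Finset ℕ) : (setPoly A).eval 1 = A.card := by
  simp [setPoly, eval_finsetSum]

theorem cyclotomic_one_dvd_setPoly_iff (A : Finset ℕ) : cyclotomic 1 ℤ ∣ setPoly A ↔ A = ∅ := by
  rw [cyclotomic_one, ← C_1, dvd_iff_isRoot, IsRoot, eval_one_setPoly]
  simp

theorem S_of_p_smul (p : ℕ) (hp : p.Prime) (Abar : Finset ℕ)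
    (hAbar : Abar.Nonempty)
    (SA : Set ℕ) (hSA : SA = {s : ℕ | IsPrimePow s ∧ cyclotomic s ℤ ∣ setPoly Abar}) :
    {s : ℕ | IsPrimePow s ∧ cyclotomic s ℤ ∣ (setPoly Abar).comp (X ^ p)} =
      {s : ℕ | ∃ α : ℕ, p ^ α ∈ SA ∧ s = p ^ (α + 1)} ∪
      {s : ℕ | s ∈ SA ∧ ∃ q β : ℕ, q.Prime ∧ q ≠ p ∧ s = q ^ β} := by
  subst hSA
  have coprime_pow {q : ℕ} (hq : q.Prime) (hqp : q ≠ p) (k : ℕ) : p.Coprime (q ^ k) :=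
    ((Nat.coprime_primes hp hq).mpr hqp.symm).pow_right k
  ext s
  simp only [Set.mem_ofPred_eq, Set.mem_union]
  constructor
  · rintro ⟨hs, hdvd⟩
    obtain ⟨q, k, hq, hk, rfl⟩ := (isPrimePow_nat_iff s).mp hs
    obtain rfl | hqp := eq_or_ne q p
    · obtain ⟨α, rfl⟩ : ∃ α, k = α + 1 := Nat.exists_eq_succ_of_ne_zero hk.ne'
      rw [pow_succ', cyclotomic_mul_dvd_comp_X_pow_iff hp.pos (pow_pos hp.pos α)] at hdvd
      have hα : α ≠ 0 := by
        rintro rfl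
        exact hAbar.ne_empty ((cyclotomic_one_dvd_setPoly_iff Abar).mp (by simpa using hdvd))
      exact Or.inl ⟨α, ⟨hp.isPrimePow.pow hα, hdvd⟩, rfl⟩
    · rw [cyclotomic_dvd_comp_X_pow_iff_of_coprime hs.pos (coprime_pow hq hqp k)] at hdvd
      exact Or.inr ⟨⟨hs, hdvd⟩, q, k, hq, hqp, rfl⟩
  · rintro (⟨α, ⟨-, hdvd⟩, rfl⟩ | ⟨⟨hs, hdvd⟩, q, β, hq, hqp, rfl⟩)
    · refine ⟨hp.isPrimePow.pow α.succ_ne_zero, ?_⟩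
      rwa [pow_succ', cyclotomic_mul_dvd_comp_X_pow_iff hp.pos (pow_pos hp.pos α)]
    · exact ⟨hs, (cyclotomic_dvd_comp_X_pow_iff_of_coprime hs.pos (coprime_pow hq hqp β) _).mpr hdvd⟩
end

section
/- If a finite set A of nonnegative integers tiles the integers, then A(1) = ∏_{s∈S_A} Φ_s(1), i.e., #A equals the product over all prime powers s with Φ_s | A(x) of the prime of which s is a power. -/
/-!
If `A ⊕ C = ℤ` and `A ⊆ [m, M]`, then whether `c ∈ C` is decided by `C` on the `L = M - m`
points below `c` (look at who covers `m + c`), and also by `C` on the `L` points above `c`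
(look at `M + c`). There are finitely many windows of length `L`, so two of them coincide and `C`
is periodic, with period `n` say; then `A ⊕ D` is a complete residue system mod `n` for
`D = C ∩ [0, n)`. Hence `A(x) D(x) ≡ 1 + x + ⋯ + x^(n-1) mod x^n - 1`, and every prime power
`s ∣ n` has `Φ_s ∣ A` or `Φ_s ∣ D`. Evaluating at `1`, the products of `Φ_s(1)` over `S_A` and
over the remaining prime powers dividing `n` divide `|A|` and `|D|`, while their product is a
multiple of `∏_{s ∣ n prime power} Φ_s(1) = n = |A| |D|`; so both divisibilities are equalities.
-/

open Polynomial

/-- A finite set of nonnegative integers tiles the integers. -/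
def Tiles (A : Finset ℕ) : Prop :=
  ∃ C : Set ℤ, ∀ z : ℤ, ∃! p : ℕ × ℤ, p.1 ∈ A ∧ p.2 ∈ C ∧ (p.1 : ℤ) + p.2 = z

theorem Function.exists_periodic_of_shift_determined {β : Type*} [Finite β] (w : ℤ → β)
    (hsucc : ∀ t t', w t = w t' → w (t + 1) = w (t' + 1))
    (hpred : ∀ t t', w t = w t' → w (t - 1) = w (t' - 1)) :
    ∃ n : ℕ, 0 < n ∧ Function.Periodic w n := by
  obtain ⟨a, b, hab, hw⟩ := Finite.exists_ne_map_eq_of_infinite w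
  have hshift : ∀ k : ℤ, w (a + k) = w (b + k) := by
    intro k
    induction k using Int.induction_on with
    | zero => simpa using hw
    | succ k ih => simpa only [← add_assoc] using hsucc _ _ ih
    | pred k ih => simpa only [← add_sub_assoc] using hpred _ _ ih
  have hper : Function.Periodic w (b - a) := fun t => by
    convert (hshift (t - a)).symm using 2 <;> ring
  refine ⟨(b - a).natAbs, Int.natAbs_pos.mpr (sub_ne_zero.mpr hab.symm), ?_⟩
  rw [Int.natCast_natAbs]
  rcases abs_choice (b - a) with h | h <;> rw [h]
  exacts [hper, hper.neg]

theorem Set.exists_periodic_of_window_determined (C : Set ℤ) (L : ℕ)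
    (hfwd : ∀ t t' : ℤ, (∀ j < L, t + j ∈ C ↔ t' + j ∈ C) → (t + L ∈ C ↔ t' + L ∈ C))
    (hbwd : ∀ t t' : ℤ, (∀ j < L, t + j ∈ C ↔ t' + j ∈ C) → (t - 1 ∈ C ↔ t' - 1 ∈ C)) :
    ∃ n : ℕ, 0 < n ∧ Function.Periodic (· ∈ C) (n : ℤ) := by
  let w : ℤ → Set (Fin L) := fun t => {j | t + (j : ℕ) ∈ C}
  have hw : ∀ t t', w t = w t' ↔ ∀ j < L, t + j ∈ C ↔ t' + j ∈ C := fun t t' => by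
    simp [w, Set.ext_iff, Fin.forall_iff]
  have hsucc : ∀ t t', w t = w t' → w (t + 1) = w (t' + 1) := by
    intro t t' h
    rw [hw] at h ⊢
    intro j hj
    rcases lt_or_eq_of_le (Nat.succ_le_of_lt hj) with hj' | rfl
    · convert h (j + 1) hj' using 2 <;> push_cast <;> ring
    · convert hfwd t t' h using 2 <;> push_cast <;> ring
  have hpred : ∀ t t', w t = w t' → w (t - 1) = w (t' - 1) := by
    intro t t' h
    rw [hw] at h ⊢
    intro j hj
    rcases Nat.eq_zero_or_pos j with rfl | hj0
    · simpa using hbwd t t' h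
    · convert h (j - 1) (by omega) using 2 <;> push_cast [Nat.cast_sub hj0] <;> ring
  obtain ⟨n, hn, hper⟩ := Function.exists_periodic_of_shift_determined w hsucc hpred
  refine ⟨n, hn, fun z => propext ?_⟩
  have := hfwd (z - L) (z - L + n) ((hw _ _).1 (hper (z - L)).symm)
  simpa [add_right_comm _ (n : ℤ)] using this.symm

theorem Function.Periodic.eq_of_intModEq {α : Type*} {f : ℤ → α} {n : ℤ}
    (h : Function.Periodic f n) {c c' : ℤ} (hc : c ≡ c' [ZMOD n]) : f c = f c' := by
  obtain ⟨k, hk⟩ := Int.modEq_iff_dvd.mp hc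
  rw [show c' = c + k * n by linarith]
  exact (h.int_mul k c).symm

/-- `A ⊕ D = ℤ/nℤ`. -/
def IsModTiling (A D : Finset ℕ) (n : ℕ) : Prop :=
  Set.BijOn (fun q : ℕ × ℕ => (q.1 + q.2) % n) ↑(A ×ˢ D) ↑(Finset.range n)

def TilesWith (A : Finset ℕ) (C : Set ℤ) : Prop :=
  ∀ z : ℤ, ∃! p : ℕ × ℤ, p.1 ∈ A ∧ p.2 ∈ C ∧ (p.1 : ℤ) + p.2 = z

namespace TilesWith

variable {A : Finset ℕ} {C : Set ℤ} {n : ℕ}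

theorem mem_iff (h : TilesWith A C) {a₀ : ℕ} (ha₀ : a₀ ∈ A) (c : ℤ) :
    c ∈ C ↔ ∀ a ∈ A, a ≠ a₀ → c + a₀ - a ∉ C := by
  obtain ⟨⟨a, c'⟩, ⟨ha, hc', hsum⟩, huniq⟩ := h (a₀ + c)
  constructor
  · rintro hc b hb hne hcb
    have h₁ := huniq (a₀, c) ⟨ha₀, hc, rfl⟩
    have h₂ := huniq (b, c + a₀ - b) ⟨hb, hcb, by ring⟩
    exact hne (congrArg Prod.fst (h₂.trans h₁.symm))
  · intro hno
    by_cases hne : a = a₀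
    · subst hne
      simpa [show c' = c by simp only at hsum; omega] using hc'
    · exact absurd (show c + a₀ - a = c' by simp only at hsum; omega ▸ hc') (hno a ha hne)

theorem exists_periodic (h : TilesWith A C) :
    ∃ n : ℕ, 0 < n ∧ Function.Periodic (· ∈ C) (n : ℤ) := by
  obtain ⟨⟨a, _⟩, ⟨ha, -⟩, -⟩ := h 0
  have hne : A.Nonempty := ⟨a, ha⟩
  refine Set.exists_periodic_of_window_determined C (A.max' hne - A.min' hne)
    (fun t t' hw => ?_) (fun t t' hw => ?_)
  · rw [h.mem_iff (A.min'_mem hne), h.mem_iff (A.min'_mem hne)]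
    refine forall₂_congr fun b hb => imp_congr_right fun hb' => not_congr ?_
    have := A.le_max' b hb
    have := Ne.lt_of_le' hb' (A.min'_le b hb)
    convert hw (A.max' hne - b) (by omega) using 2 <;> omega
  · rw [h.mem_iff (A.max'_mem hne), h.mem_iff (A.max'_mem hne)]
    refine forall₂_congr fun b hb => imp_congr_right fun hb' => not_congr ?_
    have := A.min'_le b hb
    have := Ne.lt_of_le hb' (A.le_max' b hb)
    convert hw (A.max' hne - b - 1) (by omega) using 2 <;> omega

theorem exists_isModTiling (h : TilesWith A C) (hper : Function.Periodic (· ∈ C) (n : ℤ)) :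
    ∃ D, IsModTiling A D n := by
  classical
  set D : Finset ℕ := (Finset.range n).filter fun d => (d : ℤ) ∈ C
  have hD : ∀ {q : ℕ × ℕ},
      q ∈ (A : Set ℕ) ×ˢ (D : Set ℕ) ↔ q.1 ∈ A ∧ q.2 < n ∧ (q.2 : ℤ) ∈ C := by
    simp [D]
  have hC : ∀ {c c' : ℤ}, c ≡ c' [ZMOD n] → c ∈ C → c' ∈ C :=
    fun hc => (hper.eq_of_intModEq hc).mp
  refine ⟨D, fun q hq => ?_, ?_, ?_⟩
  · rw [Finset.coe_product, hD] at hq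
    simpa using Nat.mod_lt _ ((Nat.zero_le _).trans_lt hq.2.1)
  · rintro ⟨a, d⟩ hq ⟨a', d'⟩ hq' heq
    rw [Finset.coe_product, hD] at hq hq'
    have hmod : ((a + d : ℕ) : ℤ) ≡ (a' + d' : ℕ) [ZMOD n] := Int.natCast_modEq_iff.mpr heq
    push_cast at hmod
    have hc : (a + d - a' : ℤ) ∈ C := hC (by simpa using (hmod.sub_right (a' : ℤ)).symm) hq'.2.2
    obtain ⟨p, -, hp⟩ := h (a + d)
    obtain rfl : a' = a := congrArg Prod.fst
      ((hp (a', a + d - a') ⟨hq'.1, hc, by ring⟩).trans (hp (a, d) ⟨hq.1, hq.2.2, rfl⟩).symm)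
    have hdd : d % n = d' % n := Nat.ModEq.add_left_cancel' a' heq
    rw [Nat.mod_eq_of_lt hq.2.1, Nat.mod_eq_of_lt hq'.2.1] at hdd
    exact Prod.ext rfl hdd
  · intro r hr
    rw [Finset.coe_range, Set.mem_Iio] at hr
    obtain ⟨⟨a, c⟩, ⟨ha, hc, hsum⟩, -⟩ := h r
    have hn : (0 : ℤ) < n := by exact_mod_cast (Nat.zero_le r).trans_lt hr
    have hcn := Int.emod_lt_of_pos c hn
    lift c % n to ℕ using Int.emod_nonneg c hn.ne' with d hd
    refine ⟨(a, d), ?_, ?_⟩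
    · rw [Finset.coe_product, hD]
      exact ⟨ha, by omega, hC (hd ▸ (Int.mod_modEq c n).symm) hc⟩
    · zify
      rw [hd, Int.add_emod_emod, ← hsum]
      exact Int.emod_eq_of_lt (by omega) (by omega)

end TilesWith

theorem pow_sub_one_dvd_pow_sub_pow_mod {R : Type*} [CommRing R] (x : R) (n e : ℕ) :
    x ^ n - 1 ∣ x ^ e - x ^ (e % n) := by
  have hsplit : x ^ e = x ^ (e % n) * (x ^ n) ^ (e / n) := by
    rw [← pow_mul, ← pow_add, Nat.mod_add_div]
  rw [hsplit, ← mul_sub_one]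
  exact dvd_mul_of_dvd_right (sub_one_dvd_pow_sub_one _ _) _

namespace IsModTiling

variable {A D : Finset ℕ} {n : ℕ}

theorem card_mul_card (h : IsModTiling A D n) : A.card * D.card = n := by
  rw [← Finset.card_product, ← Finset.card_range n]
  exact Finset.card_nbij _ h.mapsTo h.injOn h.surjOn

theorem X_pow_sub_one_dvd (h : IsModTiling A D n) :
    (X ^ n - 1 : ℤ[X]) ∣ setPoly A * setPoly D - ∑ r ∈ Finset.range n, X ^ r := by
  have hprod : setPoly A * setPoly D = ∑ q ∈ A ×ˢ D, (X : ℤ[X]) ^ (q.1 + q.2) := by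
    simp only [setPoly, Finset.sum_mul_sum, Finset.sum_product, pow_add]
  have hgeom : ∑ r ∈ Finset.range n, (X : ℤ[X]) ^ r = ∑ q ∈ A ×ˢ D, X ^ ((q.1 + q.2) % n) :=
    (Finset.sum_nbij _ h.mapsTo h.injOn h.surjOn fun _ _ => rfl).symm
  rw [hprod, hgeom, ← Finset.sum_sub_distrib]
  exact Finset.dvd_sum fun q _ => pow_sub_one_dvd_pow_sub_pow_mod X n _

theorem cyclotomic_dvd_mul (h : IsModTiling A D n) {s : ℕ} (hs : s ∣ n) (hs1 : s ≠ 1) :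
    cyclotomic s ℤ ∣ setPoly A * setPoly D := by
  have hXn : cyclotomic s ℤ ∣ X ^ n - 1 :=
    (cyclotomic.dvd_X_pow_sub_one s ℤ).trans (dvd_pow_sub_one_of_dvd hs)
  simpa using dvd_add (hXn.trans h.X_pow_sub_one_dvd) (cyclotomic_dvd_geom_sum_of_dvd ℤ hs hs1)

end IsModTiling

theorem Polynomial.cyclotomic_isRelPrime_s10 {s t : ℕ} (hst : s ≠ t) :
    IsRelPrime (cyclotomic s ℤ) (cyclotomic t ℤ) := by
  rcases s.eq_zero_or_pos with rfl | hs
  · simpa using isRelPrime_one_left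
  have hirr := cyclotomic.irreducible hs
  rw [hirr.isRelPrime_iff_not_dvd]
  intro hdvd
  rcases t.eq_zero_or_pos with rfl | ht
  · exact hirr.not_isUnit (isUnit_of_dvd_one (by simpa using hdvd))
  exact hst (cyclotomic_injective (eq_of_monic_of_associated (cyclotomic.monic s ℤ)
    (cyclotomic.monic t ℤ) (hirr.associated_of_dvd (cyclotomic.irreducible ht) hdvd)))

theorem prod_eval_one_cyclotomic_dvd_card {S A : Finset ℕ}
    (h : ∀ s ∈ S, cyclotomic s ℤ ∣ setPoly A) :
    ∏ s ∈ S, (cyclotomic s ℤ).eval 1 ∣ A.card := by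
  have hprod := Finset.prod_dvd_of_isRelPrime (fun s _ t _ hst => cyclotomic_isRelPrime_s10 hst) h
  simpa [eval_prod, setPoly, eval_finsetSum] using eval_dvd (x := 1) hprod

theorem prod_eval_one_cyclotomic_primePow_divisors {n : ℕ} (hn : 0 < n) :
    ∏ s ∈ n.divisors.filter IsPrimePow, (cyclotomic s ℤ).eval 1 = n := by
  have hgeom := congrArg (eval 1) (prod_cyclotomic_eq_geom_sum hn ℤ)
  simp only [eval_prod, eval_geom_sum, one_pow, Finset.sum_const, Finset.card_range,
    Int.nsmul_eq_mul, mul_one] at hgeom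
  rw [← hgeom]
  refine Finset.prod_subset (fun s hs => ?_) (fun s hs hns => eval_one_cyclotomic_not_prime_pow ?_)
  · rw [Finset.mem_filter] at hs
    exact Finset.mem_erase.mpr ⟨hs.2.ne_one, hs.1⟩
  · intro p hp k hk
    rw [Finset.mem_erase] at hs
    rcases Nat.eq_zero_or_pos k with rfl | hk0
    · exact hs.1 (by simpa using hk.symm)
    · exact hns (Finset.mem_filter.mpr ⟨hs.2, p, k, hp.prime, hk0, hk⟩)

theorem Tiles.exists_isModTiling {A : Finset ℕ} (hA : Tiles A) :
    ∃ n > 0, ∃ D, IsModTiling A D n := by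
  obtain ⟨C, hC⟩ := hA
  obtain ⟨n, hn, hper⟩ := TilesWith.exists_periodic hC
  exact ⟨n, hn, TilesWith.exists_isModTiling hC hper⟩

theorem tiles_implies_T1 (A : Finset ℕ) (hA : Tiles A)
    (S : Finset ℕ)
    (hS : ∀ s : ℕ, s ∈ S ↔ (IsPrimePow s ∧ cyclotomic s ℤ ∣ setPoly A)) :
    (A.card : ℤ) = ∏ s ∈ S, (cyclotomic s ℤ).eval 1 := by
  obtain ⟨n, hn, D, hAD⟩ := hA.exists_isModTiling
  set P := n.divisors.filter IsPrimePow
  have hAS : ∀ s ∈ S, cyclotomic s ℤ ∣ setPoly A := fun s hs => ((hS s).1 hs).2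
  have hDP : ∀ s ∈ P \ S, cyclotomic s ℤ ∣ setPoly D := by
    intro s hs
    simp only [Finset.mem_sdiff, Finset.mem_filter, Nat.mem_divisors, hS, not_and, P] at hs
    obtain ⟨⟨⟨hsn, -⟩, hpp⟩, hsA⟩ := hs
    exact ((Prime.dvd_or_dvd ((cyclotomic.irreducible hpp.pos).prime)
      (hAD.cyclotomic_dvd_mul hsn hpp.ne_one)).resolve_left (hsA hpp))
  have hcard : (A.card * D.card : ℤ) ∣
      (∏ s ∈ S, (cyclotomic s ℤ).eval 1) * ∏ s ∈ P \ S, (cyclotomic s ℤ).eval 1 := by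
    rw [← Finset.prod_union Finset.disjoint_sdiff, Finset.union_sdiff_self_eq_union,
      ← Nat.cast_mul, hAD.card_mul_card, ← prod_eval_one_cyclotomic_primePow_divisors hn]
    exact Finset.prod_dvd_prod_of_subset _ _ _ Finset.subset_union_right
  have hD0 : (D.card : ℤ) ≠ 0 :=
    Nat.cast_ne_zero.mpr fun h => hn.ne' (by rw [← hAD.card_mul_card, h, mul_zero])
  refine Int.dvd_antisymm (Nat.cast_nonneg _)
    (Finset.prod_nonneg fun s _ => cyclotomic_nonneg s le_rfl) ?_
    (prod_eval_one_cyclotomic_dvd_card hAS)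
  exact (mul_dvd_mul_iff_right hD0).mp
    (hcard.trans (mul_dvd_mul_left _ (prod_eval_one_cyclotomic_dvd_card hDP)))
end

section
/- Let A(x) and B(x) be polynomials with coefficients in {0,1}, n = A(1)·B(1), and R the set of prime power divisors s > 1 of n. If for every divisor t > 1 of n, Φ_t(x) divides A(x) or B(x), then S_A and S_B are disjoint, S_A ∪ S_B = R, A(1) = ∏_{s∈S_A} Φ_s(1), and B(1) = ∏_{s∈S_B} Φ_s(1). -/
/-!
Evaluating `∏_{d ∣ n, d > 1} Φ_d = 1 + x + ⋯ + x^(n-1)` at `1`, and using `Φ_d(1) = p` for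
`d = p^k` and `Φ_d(1) = 1` for other `d > 1`, gives `n = ∏_{s ∈ R} Φ_s(1)`. Distinct cyclotomic
polynomials are relatively prime irreducibles, so `∏_{s ∈ S_A} Φ_s(1)` divides `A(1)`, and
likewise for `B`. The hypothesis puts `R` inside `S_A ∪ S_B`, hence
`n ∣ ∏_{S_A ∪ S_B} Φ_s(1) ∣ ∏_{S_A} Φ_s(1) · ∏_{S_B} Φ_s(1) ∣ A(1) B(1) = n`.
All these factors exceed `1` and `A(1), B(1) ≥ 0` (the coefficients are `0` or `1`), so every
divisibility is an equality, which forces the partition and the two product formulas.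
-/

open Polynomial

theorem Finset.eq_empty_of_prod_dvd_one {ι : Type*} {s : Finset ι} {g : ι → ℤ}
    (hg : ∀ i ∈ s, 1 < g i) (h : ∏ i ∈ s, g i ∣ 1) : s = ∅ := by
  refine Finset.eq_empty_of_forall_notMem fun i hi => ?_
  have := Int.eq_one_of_dvd_one (by linarith [hg i hi]) ((Finset.dvd_prod_of_mem g hi).trans h)
  linarith [hg i hi]

theorem Finset.split_of_prod_eq_mul_of_prod_dvd {ι : Type*} [DecidableEq ι] {g : ι → ℤ}
    {R S T : Finset ι} {a b : ℤ} (hg : ∀ i ∈ S ∪ T, 1 < g i) (ha : 0 ≤ a) (hb : 0 ≤ b)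
    (hRST : R ⊆ S ∪ T) (hR : ∏ i ∈ R, g i = a * b)
    (hS : ∏ i ∈ S, g i ∣ a) (hT : ∏ i ∈ T, g i ∣ b) :
    Disjoint S T ∧ S ∪ T = R ∧ a = ∏ i ∈ S, g i ∧ b = ∏ i ∈ T, g i := by
  have hpos : ∀ X ⊆ S ∪ T, 0 < ∏ i ∈ X, g i :=
    fun X hX => Finset.prod_pos fun i hi => one_pos.trans (hg i (hX hi))
  obtain ⟨u, rfl⟩ := hS
  obtain ⟨v, rfl⟩ := hT
  have hu : 0 ≤ u := nonneg_of_mul_nonneg_right ha (hpos S Finset.subset_union_left)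
  have hv : 0 ≤ v := nonneg_of_mul_nonneg_right hb (hpos T Finset.subset_union_right)
  set D := ∏ i ∈ (S ∪ T) \ R, g i
  set I := ∏ i ∈ S ∩ T, g i
  have hone : D * I * (u * v) = 1 := by
    apply mul_left_cancel₀ (hpos R hRST).ne'
    calc (∏ i ∈ R, g i) * (D * I * (u * v)) = D * (∏ i ∈ R, g i) * I * (u * v) := by ring
      _ = (∏ i ∈ S, g i) * u * ((∏ i ∈ T, g i) * v) := by
        rw [Finset.prod_sdiff hRST, Finset.prod_union_inter]; ring
      _ = (∏ i ∈ R, g i) * 1 := by rw [hR, mul_one]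
  have hdiff : (S ∪ T) \ R = ∅ :=
    Finset.eq_empty_of_prod_dvd_one (fun i hi => hg i (Finset.sdiff_subset hi))
      (Dvd.intro (I * (u * v)) (by rw [← hone]; ring))
  have hinter : S ∩ T = ∅ :=
    Finset.eq_empty_of_prod_dvd_one (fun i hi => hg i (Finset.inter_subset_union hi))
      (Dvd.intro (D * (u * v)) (by rw [← hone]; ring))
  have hu1 : u = 1 := Int.eq_one_of_dvd_one hu (Dvd.intro_left (D * I * v) (by rw [← hone]; ring))
  have hv1 : v = 1 := Int.eq_one_of_dvd_one hv (Dvd.intro_left (D * I * u) (by rw [← hone]; ring))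
  exact ⟨Finset.disjoint_iff_inter_eq_empty.mpr hinter,
    (Finset.sdiff_eq_empty_iff_subset.mp hdiff).antisymm hRST,
    by rw [hu1, mul_one], by rw [hv1, mul_one]⟩

namespace Polynomial

theorem eval_nonneg_of_coeff_nonneg {R : Type*} [CommSemiring R] [PartialOrder R]
    [IsOrderedRing R] {P : R[X]} {x : R} (hP : ∀ i, 0 ≤ P.coeff i) (hx : 0 ≤ x) :
    0 ≤ P.eval x := by
  rw [eval_eq_sum_range]
  exact Finset.sum_nonneg fun i _ => mul_nonneg (hP i) (pow_nonneg hx i)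

theorem eval_one_cyclotomic_of_isPrimePow {R : Type*} [CommRing R] {s : ℕ} (hs : IsPrimePow s) :
    (cyclotomic s R).eval 1 = s.minFac := by
  obtain ⟨p, k, hp, hk, rfl⟩ := hs
  have hp : p.Prime := Nat.prime_iff.mpr hp
  have : Fact p.Prime := ⟨hp⟩
  obtain ⟨m, rfl⟩ := Nat.exists_eq_succ_of_ne_zero hk.ne'
  rw [hp.pow_minFac (Nat.succ_ne_zero m)]
  exact eval_one_cyclotomic_prime_pow m

theorem one_lt_eval_one_cyclotomic_of_isPrimePow {s : ℕ} (hs : IsPrimePow s) :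
    1 < (cyclotomic s ℤ).eval 1 := by
  rw [eval_one_cyclotomic_of_isPrimePow hs]
  exact_mod_cast (Nat.minFac_prime hs.one_lt.ne').one_lt

theorem prod_eval_one_cyclotomic_divisors_filter_isPrimePow {n : ℕ} (hn : n ≠ 0) :
    ∏ s ∈ n.divisors with IsPrimePow s, (cyclotomic s ℤ).eval 1 = n := by
  have hgeom := congrArg (eval 1) (prod_cyclotomic_eq_geom_sum (Nat.pos_of_ne_zero hn) ℤ)
  simp only [eval_prod, eval_finsetSum, eval_pow, eval_X, one_pow, Finset.sum_const,
    Finset.card_range, nsmul_eq_mul, mul_one] at hgeom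
  rw [← hgeom]
  refine Finset.prod_subset (fun s hs => ?_) fun s hs hnpp => ?_
  · rw [Finset.mem_filter] at hs
    exact Finset.mem_erase.mpr ⟨hs.2.one_lt.ne', hs.1⟩
  · refine eval_one_cyclotomic_not_prime_pow fun {p} hp k hpk => hnpp ?_
    subst hpk
    have hk : k ≠ 0 := by rintro rfl; exact (Finset.mem_erase.mp hs).1 (pow_zero p)
    exact Finset.mem_filter.mpr ⟨(Finset.mem_erase.mp hs).2, hp.isPrimePow.pow hk⟩

theorem cyclotomic.isRelPrime {n m : ℕ} (hn : 0 < n) (hm : 0 < m) (hnm : n ≠ m) :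
    IsRelPrime (cyclotomic n ℤ) (cyclotomic m ℤ) := by
  rw [(cyclotomic.irreducible hn).isRelPrime_iff_not_dvd]
  exact fun hdvd => hnm <| cyclotomic_injective <|
    eq_of_monic_of_associated (cyclotomic.monic n ℤ) (cyclotomic.monic m ℤ) <|
      (cyclotomic.irreducible hn).associated_of_dvd (cyclotomic.irreducible hm) hdvd

theorem prod_cyclotomic_dvd {S : Finset ℕ} {P : ℤ[X]} (hS : ∀ s ∈ S, 0 < s)
    (hP : ∀ s ∈ S, cyclotomic s ℤ ∣ P) : ∏ s ∈ S, cyclotomic s ℤ ∣ P :=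
  Finset.prod_dvd_of_isRelPrime
    (fun _ hi _ hj hij => cyclotomic.isRelPrime (hS _ hi) (hS _ hj) hij) hP

theorem prod_eval_one_cyclotomic_dvd {S : Finset ℕ} {P : ℤ[X]} (hS : ∀ s ∈ S, 0 < s)
    (hP : ∀ s ∈ S, cyclotomic s ℤ ∣ P) : ∏ s ∈ S, (cyclotomic s ℤ).eval 1 ∣ P.eval 1 := by
  rw [← eval_prod]
  exact eval_dvd (prod_cyclotomic_dvd hS hP)

end Polynomial

theorem cyclotomic_split (A B : Polynomial ℤ)
    (hA01 : ∀ i : ℕ, A.coeff i = 0 ∨ A.coeff i = 1)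
    (hB01 : ∀ i : ℕ, B.coeff i = 0 ∨ B.coeff i = 1)
    (n : ℕ) (hn : (n : ℤ) = A.eval 1 * B.eval 1)
    (R : Finset ℕ) (hR : ∀ s : ℕ, s ∈ R ↔ (IsPrimePow s ∧ s ∣ n))
    (SA : Finset ℕ) (hSA : ∀ s : ℕ, s ∈ SA ↔ (IsPrimePow s ∧ cyclotomic s ℤ ∣ A))
    (SB : Finset ℕ) (hSB : ∀ s : ℕ, s ∈ SB ↔ (IsPrimePow s ∧ cyclotomic s ℤ ∣ B))
    (h : ∀ t : ℕ, t ∣ n → 1 < t → cyclotomic t ℤ ∣ A ∨ cyclotomic t ℤ ∣ B) :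
    Disjoint SA SB ∧ SA ∪ SB = R ∧
    A.eval 1 = ∏ s ∈ SA, (cyclotomic s ℤ).eval 1 ∧
    B.eval 1 = ∏ s ∈ SB, (cyclotomic s ℤ).eval 1 := by
  classical
  have hn0 : n ≠ 0 := by
    rintro rfl
    exact Nat.infinite_setOfPred_prime
      (R.finite_toSet.subset fun p hp => (hR p).2 ⟨hp.isPrimePow, dvd_zero p⟩)
  have hRdiv : R = n.divisors.filter IsPrimePow := by
    ext s
    simp [hR, hn0, and_comm]
  have hRsub : R ⊆ SA ∪ SB := fun s hs => by
    obtain ⟨hpp, hdvd⟩ := (hR s).1 hs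
    rcases h s hdvd hpp.one_lt with hA | hB
    · exact Finset.mem_union_left _ ((hSA s).2 ⟨hpp, hA⟩)
    · exact Finset.mem_union_right _ ((hSB s).2 ⟨hpp, hB⟩)
  have hg : ∀ s ∈ SA ∪ SB, 1 < (cyclotomic s ℤ).eval 1 := fun s hs => by
    rcases Finset.mem_union.1 hs with hs | hs
    · exact one_lt_eval_one_cyclotomic_of_isPrimePow ((hSA s).1 hs).1
    · exact one_lt_eval_one_cyclotomic_of_isPrimePow ((hSB s).1 hs).1
  exact Finset.split_of_prod_eq_mul_of_prod_dvd hg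
    (eval_nonneg_of_coeff_nonneg (fun i => by rcases hA01 i with h | h <;> simp [h]) zero_le_one)
    (eval_nonneg_of_coeff_nonneg (fun i => by rcases hB01 i with h | h <;> simp [h]) zero_le_one)
    hRsub
    (by rw [hRdiv, prod_eval_one_cyclotomic_divisors_filter_isPrimePow hn0, hn])
    (prod_eval_one_cyclotomic_dvd (fun s hs => ((hSA s).1 hs).1.pos) fun s hs => ((hSA s).1 hs).2)
    (prod_eval_one_cyclotomic_dvd (fun s hs => ((hSB s).1 hs).1.pos) fun s hs => ((hSB s).1 hs).2)
end

section
/- Suppose A is a finite set of integers, A ⊕ C = ℤ is a tiling, and r is an integer relatively prime to #A. Then rA ⊕ C = ℤ is also a tiling, where rA = {ra : a ∈ A}. -/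
open Finset AddMonoidAlgebra

section Tiling

variable {ι G : Type*} [AddGroup G]

/-- Unlike `IsTiling`, the translates `x i + C` are indexed by `i ∈ A`, so coinciding `x i`
count separately. -/
def IsFamilyTiling (A : Finset ι) (x : ι → G) (C : Set G) : Prop :=
  ∀ ξ : G, ∃! i, i ∈ A ∧ ξ - x i ∈ C

lemma IsFamilyTiling.sub_mem_iff {A : Finset ι} {x : ι → G} {C : Set G}
    (h : IsFamilyTiling A x C) {m : ι} (hm : m ∈ A) (ξ : G) :
    ξ - x m ∈ C ↔ ∀ i ∈ A, i ≠ m → ξ - x i ∉ C := by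
  obtain ⟨j, ⟨hj, hjC⟩, huniq⟩ := h ξ
  refine ⟨fun hmC i hi hne hiC => hne ((huniq i ⟨hi, hiC⟩).trans (huniq m ⟨hm, hmC⟩).symm),
    fun hall => ?_⟩
  by_cases hjm : j = m
  · exact hjm ▸ hjC
  · exact absurd hjC (hall j hj hjm)

lemma isFamilyTiling_preimage_iff {H : Type*} [AddGroup H] {π : G →+ H}
    (hπ : Function.Surjective π) {A : Finset ι} {x : ι → G} {D : Set H} :
    IsFamilyTiling A x (π ⁻¹' D) ↔ IsFamilyTiling A (π ∘ x) D := by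
  rw [IsFamilyTiling, IsFamilyTiling, hπ.forall]
  simp only [Set.mem_preimage, map_sub, Function.comp_apply]

variable [DecidableEq G]

lemma isFamilyTiling_iff_card {A : Finset ι} {x : ι → G} {C : Finset G} :
    IsFamilyTiling A x ↑C ↔ ∀ ξ, #{i ∈ A | ξ - x i ∈ C} = 1 := by
  simp [IsFamilyTiling, card_eq_one_iff_existsUnique]

lemma sum_card_filter_sub_mem [Fintype G] (A : Finset ι) (x : ι → G) (C : Finset G) :
    ∑ ξ, #{i ∈ A | ξ - x i ∈ C} = #A * #C := by
  have hshift : ∀ i, ∑ ξ : G, (if ξ - x i ∈ C then 1 else 0) = #C := fun i => by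
    rw [Fintype.sum_equiv (Equiv.subRight (x i)) (fun ξ => if ξ - x i ∈ C then 1 else 0)
      (fun ξ => if ξ ∈ C then 1 else 0) fun _ => rfl]
    simp
  simp only [card_filter]
  rw [sum_comm, sum_congr rfl fun i _ => hshift i, sum_const, smul_eq_mul]

lemma IsFamilyTiling.of_one_le_card [Fintype G] {A : Finset ι} {x y : ι → G} {C : Finset G}
    (h : IsFamilyTiling A x ↑C) (hy : ∀ ξ, 1 ≤ #{i ∈ A | ξ - y i ∈ C}) :
    IsFamilyTiling A y ↑C := by
  rw [isFamilyTiling_iff_card] at h ⊢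
  have htotal : ∑ _ξ : G, 1 = ∑ ξ, #{i ∈ A | ξ - y i ∈ C} := by
    rw [sum_card_filter_sub_mem, ← sum_card_filter_sub_mem A x, sum_congr rfl fun ξ _ => h ξ]
  exact fun ξ => ((sum_eq_sum_iff_of_le fun ξ _ => hy ξ).1 htotal ξ (mem_univ ξ)).symm

end Tiling

instance AddMonoidAlgebra.instCharP {R M : Type*} [Semiring R] [AddMonoid M] (p : ℕ)
    [CharP R p] : CharP (AddMonoidAlgebra R M) p :=
  charP_of_injective_ringHom (f := singleZeroRingHom) single_right_injective p

section GroupAlgebra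

variable {ι G : Type*} (p : ℕ)

noncomputable def familySum (A : Finset ι) (x : ι → G) : AddMonoidAlgebra (ZMod p) G :=
  ∑ i ∈ A, single (x i) 1

variable {p}

lemma coeff_familySum_univ [Fintype G] (ξ : G) : (familySum (G := G) p univ id).coeff ξ = 1 := by
  classical
  simp [familySum, Finsupp.single_apply]

variable [AddCommGroup G]

lemma coeff_familySum_mul_familySum [DecidableEq G] (A : Finset ι) (x : ι → G) (C : Finset G)
    (ξ : G) : (familySum p A x * familySum p C id).coeff ξ = #{i ∈ A | ξ - x i ∈ C} := by
  simp only [familySum, sum_mul_sum, single_mul_single, mul_one, coeff_sum, coeff_single,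
    Finsupp.finsetSum_apply, Finsupp.single_apply, id, card_filter, Nat.cast_sum]
  refine sum_congr rfl fun i _ => ?_
  simp [add_comm (x i), ← eq_sub_iff_add_eq]

lemma familySum_pow_char [Fact p.Prime] (A : Finset ι) (x : ι → G) :
    familySum p A x ^ p = familySum p A (p • x) := by
  simp [familySum, sum_pow_char, single_pow]

lemma single_mul_familySum_univ [Fintype G] (g : G) :
    single g 1 * familySum p univ id = familySum p univ id := by
  simp only [familySum, mul_sum, single_mul_single, mul_one, id]
  exact Fintype.sum_equiv (Equiv.addLeft g) _ _ fun _ => rfl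

lemma familySum_pow_mul_familySum_univ [Fintype G] (A : Finset ι) (x : ι → G) (k : ℕ) :
    familySum p A x ^ k * familySum p univ id = #A ^ k • familySum (G := G) p univ id := by
  induction k with
  | zero => simp
  | succ k ih =>
    rw [pow_succ, mul_assoc, familySum, sum_mul,
      sum_congr rfl fun i _ => single_mul_familySum_univ (x i), sum_const, ← familySum,
      mul_smul_comm, ih, smul_smul, ← pow_succ']

lemma IsFamilyTiling.familySum_mul [Fintype G] [DecidableEq G] {A : Finset ι} {x : ι → G}
    {C : Finset G} (h : IsFamilyTiling A x ↑C) :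
    familySum p A x * familySum p C id = familySum p univ id := by
  rw [isFamilyTiling_iff_card] at h
  ext ξ
  rw [coeff_familySum_mul_familySum, h, coeff_familySum_univ, Nat.cast_one]

theorem IsFamilyTiling.nsmul_of_prime [Fintype G] [DecidableEq G] {A : Finset ι} {x : ι → G}
    {C : Finset G} (h : IsFamilyTiling A x ↑C) (hp : p.Prime) (hpA : ¬ p ∣ #A) :
    IsFamilyTiling A (p • x) ↑C := by
  have := Fact.mk hp
  have hfrob : familySum p A (p • x) * familySum p C id = familySum p univ id := calc
    _ = familySum p A x ^ (p - 1) * (familySum p A x * familySum p C id) := by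
      rw [← familySum_pow_char, ← mul_assoc, ← pow_succ, Nat.sub_add_cancel hp.one_le]
    _ = ((#A : ZMod p) ^ (p - 1)) • familySum p univ id := by
      rw [h.familySum_mul, familySum_pow_mul_familySum_univ, ← Nat.cast_smul_eq_nsmul (ZMod p),
        Nat.cast_pow]
    _ = _ := by
      rw [ZMod.pow_card_sub_one_eq_one (by rwa [Ne, ZMod.natCast_eq_zero_iff]), one_smul]
  refine h.of_one_le_card fun ξ => Nat.one_le_iff_ne_zero.2 fun hzero => ?_
  have := congrArg (fun f => f.coeff ξ) hfrob
  simp only [coeff_familySum_mul_familySum, hzero, coeff_familySum_univ, Nat.cast_zero] at this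
  exact zero_ne_one this

theorem IsFamilyTiling.nsmul_of_coprime [Fintype G] [DecidableEq G] {A : Finset ι} {x : ι → G}
    {C : Finset G} (h : IsFamilyTiling A x ↑C) {k : ℕ} (hk : k.Coprime #A) :
    IsFamilyTiling A (k • x) ↑C := by
  induction k using induction_on_primes with
  | zero =>
    obtain ⟨a, rfl⟩ := card_eq_one.1 ((Nat.coprime_zero_left _).1 hk)
    intro ξ
    obtain ⟨b, ⟨hb, hbC⟩, -⟩ := h (ξ + x a)
    rw [mem_singleton.1 hb, add_sub_cancel_right] at hbC
    exact ⟨a, ⟨mem_singleton_self a, by simpa using hbC⟩, fun j hj => mem_singleton.1 hj.1⟩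
  | one => simpa using h
  | prime_mul p k hp ih =>
    rw [mul_smul]
    exact (ih (Nat.Coprime.coprime_mul_left hk)).nsmul_of_prime hp
      ((Nat.Prime.coprime_iff_not_dvd hp).1 (Nat.Coprime.coprime_mul_right hk))

theorem IsFamilyTiling.zsmul_of_isCoprime [Fintype G] [DecidableEq G] {A : Finset ι}
    {x : ι → G} {C : Finset G} (h : IsFamilyTiling A x ↑C) {r : ℤ} (hr : IsCoprime r #A) :
    IsFamilyTiling A (r • x) ↑C := by
  obtain ⟨i, ⟨hi, -⟩, -⟩ := h 0
  set m : ℤ := #A * Fintype.card G with hm_def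
  have hm : m ≠ 0 := mul_ne_zero (by exact_mod_cast card_ne_zero_of_mem hi)
    (by exact_mod_cast Fintype.card_ne_zero)
  obtain ⟨k, hk⟩ := Int.eq_ofNat_of_zero_le (Int.emod_nonneg r hm)
  have hkr : (k : ℤ) ≡ r [ZMOD m] := hk ▸ Int.mod_modEq r m
  have hcop : k.Coprime #A := by
    have hk' : (k : ℤ) = r + #A * (-(Fintype.card G) * (r / m)) := by
      rw [← hk, Int.emod_def, hm_def]
      ring
    rw [← Nat.isCoprime_iff_coprime, hk']
    exact hr.add_mul_left_left _
  have hsmul : r • x = (k : ℤ) • x := funext fun _ =>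
    zsmul_eq_zsmul_iff_modEq.2 ((hkr.of_mul_left _).symm.of_dvd
      (Int.natCast_dvd_natCast.2 addOrderOf_dvd_card))
  rw [hsmul, natCast_zsmul]
  exact h.nsmul_of_coprime hcop

end GroupAlgebra

section Periodicity

lemma exists_periodic_of_finite {S : Type*} [Finite S] (s : ℤ → S)
    (hs : ∀ x y, s x = s y → s (x + 1) = s (y + 1) ∧ s (x - 1) = s (y - 1)) :
    ∃ n : ℕ, 0 < n ∧ Function.Periodic s n := by
  obtain ⟨x, y, hne, hxy⟩ := Finite.exists_ne_map_eq_of_infinite s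
  wlog hlt : x < y generalizing x y
  · exact this y x hne.symm hxy.symm (hne.symm.lt_of_le (not_lt.1 hlt))
  have hshift : ∀ k : ℤ, s (x + k) = s (y + k) := by
    intro k
    induction k using Int.induction_on with
    | zero => simpa using hxy
    | succ k ih => simpa only [add_assoc] using (hs _ _ ih).1
    | pred k ih => simpa only [sub_eq_add_neg, add_assoc] using (hs _ _ ih).2
  refine ⟨(y - x).toNat, by omega, fun t => ?_⟩
  rw [Int.toNat_of_nonneg (by omega)]
  convert (hshift (t - x)).symm using 2 <;> ring

lemma exists_periodic_mem_of_window {C : Set ℤ} (d : ℤ)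
    (hstep : ∀ x y, (∀ j ∈ Set.Ico 0 d, x + j ∈ C ↔ y + j ∈ C) →
      (x + d ∈ C ↔ y + d ∈ C) ∧ (x - 1 ∈ C ↔ y - 1 ∈ C)) :
    ∃ n : ℕ, 0 < n ∧ Function.Periodic (· ∈ C) (n : ℤ) := by
  let window (t : ℤ) : Set.Ico 0 d → Prop := fun j => t + j ∈ C
  have hwindow : ∀ x y, window x = window y ↔ ∀ j ∈ Set.Ico 0 d, x + j ∈ C ↔ y + j ∈ C := by
    simp [window, funext_iff]
  obtain ⟨n, hn, hper⟩ := exists_periodic_of_finite window fun x y hxy => by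
    rw [hwindow] at hxy
    obtain ⟨hlast, hfirst⟩ := hstep x y hxy
    rw [hwindow, hwindow]
    constructor
    · rintro j ⟨hj0, hjd⟩
      rcases (by omega : j + 1 < d ∨ j + 1 = d) with hj | hj
      · convert hxy (j + 1) ⟨by omega, hj⟩ using 2 <;> ring
      · convert hlast using 2 <;> omega
    · rintro j ⟨hj0, hjd⟩
      rcases (by omega : j = 0 ∨ 1 ≤ j) with rfl | hj
      · simpa using hfirst
      · convert hxy (j - 1) ⟨by omega, by omega⟩ using 2 <;> ring
  refine ⟨n, hn, fun t => propext ?_⟩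
  convert (hstep (t - d + n) (t - d) ((hwindow _ _).1 (hper (t - d)))).1 using 2 <;> ring

theorem IsFamilyTiling.exists_periodic {A : Finset ℤ} {C : Set ℤ} (h : IsFamilyTiling A id C) :
    ∃ n : ℕ, 0 < n ∧ Function.Periodic (· ∈ C) (n : ℤ) := by
  obtain ⟨a₀, ⟨ha₀, -⟩, -⟩ := h 0
  have hA : A.Nonempty := ⟨a₀, ha₀⟩
  set m := A.min' hA
  set M := A.max' hA
  -- `z ∈ C` iff no translate `a + C` with `a ≠ b` contains `z + b`; for `b = m` (resp. `b = M`)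
  -- these translates are tested at points of the window of length `M - m` below (resp. above) `z`.
  have hdet : ∀ b ∈ A, ∀ e : ℤ, (∀ a ∈ A, a ≠ b → e + b - a ∈ Set.Ico 0 (M - m)) →
      ∀ x y : ℤ, (∀ j ∈ Set.Ico 0 (M - m), x + j ∈ C ↔ y + j ∈ C) →
      (x + e ∈ C ↔ y + e ∈ C) := by
    intro b hb e he x y hxy
    have hrule (z : ℤ) : z ∈ C ↔ ∀ a ∈ A, a ≠ b → z + b - a ∉ C := by
      simpa using h.sub_mem_iff hb (z + b)
    rw [hrule, hrule]
    refine forall₂_congr fun a ha => imp_congr_right fun hne => not_congr ?_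
    convert hxy (e + b - a) (he a ha hne) using 2 <;> ring
  have hbounds : ∀ a ∈ A, m ≤ a ∧ a ≤ M := fun a ha => ⟨A.min'_le a ha, A.le_max' a ha⟩
  have hbelow : ∀ a ∈ A, a ≠ m → M - m + m - a ∈ Set.Ico 0 (M - m) := fun a ha hne => by
    have := hbounds a ha
    constructor <;> omega
  have habove : ∀ a ∈ A, a ≠ M → -1 + M - a ∈ Set.Ico 0 (M - m) := fun a ha hne => by
    have := hbounds a ha
    constructor <;> omega
  exact exists_periodic_mem_of_window _ fun x y hxy =>
    ⟨hdet m (A.min'_mem hA) _ hbelow x y hxy,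
      by simpa [sub_eq_add_neg] using hdet M (A.max'_mem hA) (-1) habove x y hxy⟩

lemma preimage_image_intCast_of_periodic {C : Set ℤ} {n : ℕ}
    (hC : Function.Periodic (· ∈ C) (n : ℤ)) :
    (Int.cast : ℤ → ZMod n) ⁻¹' (Int.cast '' C) = C := by
  ext z
  simp only [Set.mem_preimage, Set.mem_image, ZMod.intCast_eq_intCast_iff_dvd_sub]
  refine ⟨fun ⟨c, hc, k, hk⟩ => ?_, fun hz => ⟨z, hz, by simp⟩⟩
  rw [show z = c + k * n by linarith]
  exact (hC.int_mul k c).mpr hc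

end Periodicity

lemma IsTiling.isFamilyTiling {A : Finset ℤ} {C : Set ℤ} (h : IsTiling ↑A C) :
    IsFamilyTiling A id C := by
  intro z
  obtain ⟨⟨a, c⟩, ⟨ha, hc, hac⟩, huniq⟩ := h z
  refine ⟨a, ⟨ha, by simpa [← hac] using hc⟩, fun b ⟨hb, hbC⟩ => ?_⟩
  exact congrArg Prod.fst (huniq (b, z - b) ⟨hb, hbC, add_sub_cancel _ _⟩)

lemma IsFamilyTiling.isTiling_image {A : Finset ℤ} {f : ℤ → ℤ} {C : Set ℤ}
    (h : IsFamilyTiling A f C) : IsTiling ↑(A.image f) C := by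
  intro z
  obtain ⟨a, ⟨ha, haC⟩, huniq⟩ := h z
  refine ⟨(f a, z - f a), ⟨mem_coe.2 (mem_image_of_mem f ha), haC, add_sub_cancel _ _⟩, ?_⟩
  rintro ⟨b, c⟩ ⟨hb, hc, rfl⟩
  obtain ⟨a', ha', rfl⟩ : ∃ a' ∈ A, f a' = b := by simpa using hb
  rw [huniq a' ⟨ha', by simpa using hc⟩]
  simp

theorem tijdeman (A : Finset ℤ) (C : Set ℤ) (h : IsTiling (↑A) C)
    (r : ℤ) (hr : IsCoprime r (A.card : ℤ)) :
    IsTiling (↑(A.image fun a => r * a)) C := by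
  classical
  have hA := h.isFamilyTiling
  obtain ⟨n, hn, hper⟩ := hA.exists_periodic
  have : NeZero n := ⟨hn.ne'⟩
  have hCD : C = Int.castAddHom (ZMod n) ⁻¹' ↑(Int.cast '' C : Set (ZMod n)).toFinset := by
    simp [preimage_image_intCast_of_periodic hper]
  rw [hCD] at hA ⊢
  apply IsFamilyTiling.isTiling_image
  rw [isFamilyTiling_preimage_iff ZMod.intCast_surjective] at hA ⊢
  have hmul : Int.castAddHom (ZMod n) ∘ (fun a => r * a) = r • (Int.castAddHom (ZMod n) ∘ id) := by
    funext a
    simp [zsmul_eq_mul]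
  rw [hmul]
  exact hA.zsmul_of_isCoprime hr
end

section
/- If a finite set A tiles the integers, then there is a tiling A ⊕ C = ℤ whose period n is a product of powers of primes dividing #A (i.e., every prime factor of n divides #A). -/
open Finset
open scoped Pointwise

theorem Finset.existsUnique_ne_zero_of_sum_eq_one {ι : Type*} {s : Finset ι} {f : ι → ℕ}
    (h : ∑ i ∈ s, f i = 1) : ∃! i, i ∈ s ∧ f i ≠ 0 := by
  obtain ⟨i, hi, hfi⟩ := exists_ne_zero_of_sum_ne_zero (h ▸ one_ne_zero)
  refine ⟨i, ⟨hi, hfi⟩, fun j ⟨hj, hfj⟩ => by_contra fun hji => ?_⟩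
  have := add_le_sum (fun k _ => Nat.zero_le (f k)) hj hi hji
  omega

theorem Int.mem_stabilizer_iff {C : Set ℤ} {t : ℤ} :
    t ∈ AddAction.stabilizer ℤ C ↔ ∀ c, c ∈ C ↔ c + t ∈ C := by
  rw [AddAction.mem_stabilizer_set]
  exact forall_congr' fun c => by rw [vadd_eq_add, add_comm]; exact Iff.comm

theorem Int.mem_iff_of_intCast_eq {C : Set ℤ} {M : ℕ}
    (hM : (M : ℤ) ∈ AddAction.stabilizer ℤ C) {c c' : ℤ} (h : (c : ZMod M) = c') :
    c ∈ C ↔ c' ∈ C := by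
  obtain ⟨k, hk⟩ := (ZMod.intCast_eq_intCast_iff_dvd_sub c c' M).1 h
  rw [Int.mem_stabilizer_iff.1 (zsmul_mem hM k) c, smul_eq_mul, mul_comm, ← hk, add_sub_cancel]

theorem Int.exists_finset_eq_setOf_add_mul {C : Set ℤ} {n : ℕ} (hn : 0 < n)
    (hC : (n : ℤ) ∈ AddAction.stabilizer ℤ C) :
    ∃ B : Finset ℤ, C = {c : ℤ | ∃ b ∈ B, ∃ z : ℤ, c = b + n * z} := by
  classical
  have hmul (c z : ℤ) : c ∈ C ↔ c + n * z ∈ C := by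
    rw [mul_comm, ← smul_eq_mul]
    exact Int.mem_stabilizer_iff.1 (zsmul_mem hC z) c
  refine ⟨(Ico 0 (n : ℤ)).filter (· ∈ C), Set.ext fun c => ⟨fun hc => ?_, ?_⟩⟩
  · refine ⟨c % n, mem_filter.2 ⟨mem_Ico.2 ⟨Int.emod_nonneg c (by omega), Int.emod_lt_of_pos c
      (by omega)⟩, ?_⟩, c / n, (Int.emod_add_mul_ediv c n).symm⟩
    rwa [hmul _ (c / n), Int.emod_add_mul_ediv]
  · rintro ⟨b, hb, z, rfl⟩
    exact (hmul b z).1 (mem_filter.1 hb).2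

theorem AddSubgroup.exists_eq_zmultiples_natCast (H : AddSubgroup ℤ) :
    ∃ n : ℕ, H = zmultiples (n : ℤ) := by
  obtain ⟨a, rfl⟩ := Int.subgroup_cyclic H
  exact ⟨a.natAbs, by rw [Int.zmultiples_natAbs, zmultiples_eq_closure]⟩

theorem isTiling_iff {A C : Set ℤ} : IsTiling A C ↔ ∀ z, ∃! a, a ∈ A ∧ z - a ∈ C := by
  refine forall_congr' fun z => ⟨?_, ?_⟩
  · rintro ⟨⟨a, c⟩, ⟨ha, hc, rfl⟩, hu⟩
    refine ⟨a, ⟨ha, by simpa using hc⟩, fun a' ⟨ha', hc'⟩ => ?_⟩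
    exact congrArg Prod.fst (hu (a', a + c - a') ⟨ha', hc', by ring⟩)
  · rintro ⟨a, ⟨ha, hc⟩, hu⟩
    refine ⟨(a, z - a), ⟨ha, hc, by ring⟩, fun ⟨a', c'⟩ ⟨ha', hc', hz⟩ => ?_⟩
    obtain rfl : a' = a := hu a' ⟨ha', by simpa [← hz] using hc'⟩
    simp [← hz]

namespace IsTiling

variable {A C C' : Set ℤ}

theorem nonempty (h : IsTiling A C) : A.Nonempty :=
  let ⟨a, ⟨ha, _⟩, _⟩ := isTiling_iff.1 h 0
  ⟨a, ha⟩

theorem neg (h : IsTiling A C) : IsTiling (-A) (-C) := by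
  rw [isTiling_iff] at h ⊢
  intro z
  obtain ⟨a, ⟨ha, hc⟩, hu⟩ := h (-z)
  refine ⟨-a, ⟨by simpa using ha, by simpa [neg_add_eq_sub] using hc⟩, fun a' ⟨ha', hc'⟩ => ?_⟩
  rw [← hu (-a') ⟨ha', by simpa [neg_add_eq_sub, sub_eq_add_neg, add_comm] using hc'⟩, neg_neg]

theorem preimage_add (h : IsTiling A C) (s : ℤ) : IsTiling A ((· + s) ⁻¹' C) := by
  rw [isTiling_iff] at h ⊢
  intro z
  simpa only [Set.mem_preimage, sub_add_eq_add_sub] using h (z + s)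

theorem mem_iff_forall_notMem (h : IsTiling A C) {a₀ : ℤ} (ha₀ : a₀ ∈ A) (c : ℤ) :
    c ∈ C ↔ ∀ a ∈ A, a ≠ a₀ → c + a₀ - a ∉ C := by
  obtain ⟨a₁, ⟨ha₁, hc₁⟩, hu⟩ := isTiling_iff.1 h (c + a₀)
  constructor
  · intro hc a ha hne hca
    exact hne ((hu a ⟨ha, hca⟩).trans (hu a₀ ⟨ha₀, by simpa using hc⟩).symm)
  · intro hall
    by_cases hne : a₁ = a₀
    · simpa [hne] using hc₁
    · exact absurd hc₁ (hall a₁ ha₁ hne)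

/-- With `a₀ = min A`, the points `c + a₀ - a` deciding whether `c ∈ C` lie in `[c - L, c)`. -/
theorem mem_iff_of_forall_Ico (hC : IsTiling A C) (hC' : IsTiling A C') {a₀ L t : ℤ}
    (ha₀ : a₀ ∈ A) (hA : ∀ a ∈ A, a₀ ≤ a ∧ a ≤ a₀ + L)
    (hwin : ∀ i ∈ Set.Ico t (t + L), i ∈ C ↔ i ∈ C') {i : ℤ} (hi : t ≤ i) : i ∈ C ↔ i ∈ C' := by
  induction hk : (i - t).toNat using Nat.strong_induction_on generalizing i with
  | _ k ih =>
  by_cases hiL : i < t + L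
  · exact hwin i ⟨hi, hiL⟩
  rw [hC.mem_iff_forall_notMem ha₀, hC'.mem_iff_forall_notMem ha₀]
  refine forall₂_congr fun a ha => imp_congr_right fun hne => not_congr ?_
  have := hA a ha
  have hlt : a₀ < a := lt_of_le_of_ne this.1 (Ne.symm hne)
  exact ih _ (by omega) (by omega) rfl

theorem eq_of_forall_Ico {A : Finset ℤ} {C C' : Set ℤ} (hC : IsTiling A C) (hC' : IsTiling A C')
    {L : ℤ} (hL : ∀ a ∈ A, ∀ b ∈ A, a - b ≤ L) {t : ℤ}
    (hwin : ∀ i ∈ Set.Ico t (t + L), i ∈ C ↔ i ∈ C') : C = C' := by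
  have hne : A.Nonempty := Finset.coe_nonempty.1 hC.nonempty
  ext i
  rcases le_or_gt t i with hi | hi
  · exact hC.mem_iff_of_forall_Ico hC' (A.min'_mem hne)
      (fun a ha => ⟨A.min'_le a ha, by linarith [hL a ha _ (A.min'_mem hne)]⟩) hwin hi
  · have hneg := hC.neg.mem_iff_of_forall_Ico hC'.neg (a₀ := -A.max' hne) (L := L)
      (t := -(t + L) + 1) (by simpa using A.max'_mem hne)
      (fun a ha => by
        have := A.le_max' (-a) (by simpa using ha)
        exact ⟨by linarith, by linarith [hL _ (A.max'_mem hne) (-a) (by simpa using ha)]⟩)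
      (fun j ⟨hj₁, hj₂⟩ => by simpa using hwin (-j) ⟨by omega, by omega⟩) (i := -i)
      (by linarith [hL _ (A.min'_mem hne) _ (A.min'_mem hne)])
    simpa using hneg

theorem exists_period {A : Finset ℤ} {C : Set ℤ} (hC : IsTiling A C) :
    ∃ M : ℕ, 0 < M ∧ (M : ℤ) ∈ AddAction.stabilizer ℤ C := by
  have hne : A.Nonempty := Finset.coe_nonempty.1 hC.nonempty
  set L := (A.max' hne - A.min' hne).toNat
  have hL : ∀ a ∈ A, ∀ b ∈ A, a - b ≤ L := fun a ha b hb => by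
    linarith [A.le_max' a ha, A.min'_le b hb, Int.self_le_toNat (A.max' hne - A.min' hne)]
  obtain ⟨u, v, huv, hf⟩ := Finite.exists_ne_map_eq_of_infinite
    fun (j : ℕ) (r : Fin L) => (j + r : ℤ) ∈ C
  wlog h : u < v generalizing u v
  · exact this v u huv.symm hf.symm (by omega)
  refine ⟨v - u, by omega, Int.mem_stabilizer_iff.2 fun c =>
    Set.ext_iff.1 (?_ : C = (· + ((v - u : ℕ) : ℤ)) ⁻¹' C) c⟩
  refine (hC.eq_of_forall_Ico (hC.preimage_add _) hL (t := u) fun i ⟨hi₁, hi₂⟩ => ?_)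
  have := congrFun hf ⟨(i - u).toNat, by omega⟩
  rw [eq_iff_iff, show (u : ℤ) + (i - u).toNat = i by omega] at this
  rw [Set.mem_preimage, show i + ((v - u : ℕ) : ℤ) = v + (i - u).toNat by omega]
  exact this

end IsTiling

theorem AddMonoidAlgebra.coeff_sum_single_mul {R G ι : Type*} [Semiring R] [AddCommGroup G]
    (s : Finset ι) (ψ : ι → G) (x : AddMonoidAlgebra R G) (z : G) :
    ((∑ i ∈ s, single (ψ i) 1) * x).coeff z = ∑ i ∈ s, x.coeff (z - ψ i) := by
  simp [Finset.sum_mul, Finsupp.finsetSum_apply, neg_add_eq_sub]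

/-- `s ⊕ g = G` for a multiset `g`, given by its multiplicities; the elements of `s` are indexed
through `φ` so that coincidences such as those in `p • A` are counted with multiplicity. -/
def IsMultiTiling {G ι : Type*} [AddGroup G] (s : Finset ι) (φ : ι → G) (g : G → ℕ) : Prop :=
  ∀ z, ∑ i ∈ s, g (z - φ i) = 1

namespace IsMultiTiling

open AddMonoidAlgebra

variable {ι : Type*} {s : Finset ι}

section AddCommGroup

variable {G : Type*} [AddCommGroup G] {φ ψ : ι → G} {g : G → ℕ}

theorem comp_addMonoidHom {H : Type*} [AddGroup H] (f : H →+ G) {ψ : ι → H}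
    (h : IsMultiTiling s (f ∘ ψ) g) : IsMultiTiling s ψ (g ∘ f) := fun z => by
  simpa only [Function.comp_apply, map_sub] using h (f z)

variable [Fintype G]

theorem sum_sum_sub_eq (s : Finset ι) (φ : ι → G) (g : G → ℕ) :
    ∑ z, ∑ i ∈ s, g (z - φ i) = #s * ∑ x, g x := by
  rw [Finset.sum_comm, ← smul_eq_mul, ← Finset.sum_const]
  exact Finset.sum_congr rfl fun i _ => Fintype.sum_equiv (Equiv.subRight (φ i)) _ _ fun _ => rfl

theorem of_one_le (h : IsMultiTiling s φ g) (hψ : ∀ z, 1 ≤ ∑ i ∈ s, g (z - ψ i)) :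
    IsMultiTiling s ψ g := by
  have htotal : ∑ z : G, 1 = ∑ z, ∑ i ∈ s, g (z - ψ i) := by
    rw [sum_sum_sub_eq, ← sum_sum_sub_eq s φ]
    exact Finset.sum_congr rfl fun z _ => (h z).symm
  exact fun z => ((Finset.sum_eq_sum_iff_of_le fun z _ => hψ z).1 htotal z (mem_univ z)).symm

theorem natCast_sum_nsmul_eq_one {p : ℕ} [Fact p.Prime] (hs : ¬ p ∣ #s)
    (h : IsMultiTiling s φ g) (z : G) :
    ((∑ i ∈ s, g (z - p • φ i) : ℕ) : ZMod p) = 1 := by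
  have : CharP (AddMonoidAlgebra (ZMod p) G) p := charP_of_injective_algebraMap' (ZMod p) p
  -- `F = ∑ X^(φ i)`, `W = ∑ g x • X^x` and `U = ∑ X^x`, so that the tiling reads `F * W = U`
  set F : AddMonoidAlgebra (ZMod p) G := ∑ i ∈ s, single (φ i) 1
  set W : AddMonoidAlgebra (ZMod p) G :=
    ofCoeff (Finsupp.equivFunOnFinite.symm fun x => (g x : ZMod p))
  set U : AddMonoidAlgebra (ZMod p) G := ofCoeff (Finsupp.equivFunOnFinite.symm 1)
  have hFW : F * W = U := by
    ext z
    rw [coeff_sum_single_mul]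
    simp [W, U, ← Nat.cast_sum, h z]
  have hFU : F * U = (#s : ZMod p) • U := by
    ext z
    rw [coeff_sum_single_mul]
    simp [U]
  have hFrob : F ^ p = ∑ i ∈ s, single (p • φ i) 1 := by
    simp [F, sum_pow_char, single_pow]
  have hFU_pow (k : ℕ) : F ^ k * U = (#s : ZMod p) ^ k • U := by
    induction k with
    | zero => simp
    | succ k ih => rw [pow_succ, mul_assoc, hFU, mul_smul_comm, ih, smul_smul, pow_succ']
  have hcard : (#s : ZMod p) ^ (p - 1) = 1 :=
    ZMod.pow_card_sub_one_eq_one fun h0 => hs ((ZMod.natCast_eq_zero_iff _ _).1 h0)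
  have hFrobW : F ^ p * W = U :=
    calc F ^ p * W = F ^ (p - 1) * (F * W) := by
          rw [← mul_assoc, ← pow_succ, Nat.sub_add_cancel (Fact.out : p.Prime).one_lt.le]
      _ = U := by rw [hFW, hFU_pow, hcard, one_smul]
  have := congrArg (fun x => x.coeff z) hFrobW
  simp only [hFrob, coeff_sum_single_mul] at this
  simpa [W, U] using this

theorem nsmul_of_not_dvd {p : ℕ} (hp : p.Prime) (hs : ¬ p ∣ #s) (h : IsMultiTiling s φ g) :
    IsMultiTiling s (fun i => p • φ i) g := by
  have : Fact p.Prime := ⟨hp⟩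
  refine h.of_one_le fun z => Nat.one_le_iff_ne_zero.2 fun h0 => ?_
  simpa [h0] using h.natCast_sum_nsmul_eq_one hs z

end AddCommGroup

variable {φ : ι → ℤ}

/-- Pull `g` back along the embedding `x ↦ p * x` of `ZMod N` into `ZMod (p * N)`. -/
theorem exists_zmod_of_nsmul {p N : ℕ} {g : ZMod (p * N) → ℕ}
    (h : IsMultiTiling s (fun i => p • (φ i : ZMod (p * N))) g) :
    ∃ g' : ZMod N → ℕ, IsMultiTiling s (fun i => (φ i : ZMod N)) g' := by
  let f : ZMod N →+ ZMod (p * N) := ZMod.lift N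
    ⟨(AddMonoidHom.mulLeft (p : ZMod (p * N))).comp (Int.castAddHom _), by simp [← Nat.cast_mul]⟩
  refine ⟨g ∘ f, comp_addMonoidHom f ?_⟩
  have hf : f ∘ (fun i => (φ i : ZMod N)) = fun i => p • (φ i : ZMod (p * N)) :=
    funext fun i => by simp [f, ZMod.lift_coe, nsmul_eq_mul]
  rw [hf]
  exact h

theorem exists_zmod_forall_prime_dvd_card {M : ℕ} (hM : 0 < M) {g : ZMod M → ℕ}
    (h : IsMultiTiling s (fun i => (φ i : ZMod M)) g) :
    ∃ S : ℕ, 0 < S ∧ (∀ p : ℕ, p.Prime → p ∣ S → p ∣ #s) ∧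
      ∃ g' : ZMod S → ℕ, IsMultiTiling s (fun i => (φ i : ZMod S)) g' := by
  induction M using Nat.strong_induction_on with
  | _ M ih =>
  by_cases hgood : ∀ p : ℕ, p.Prime → p ∣ M → p ∣ #s
  · exact ⟨M, hM, hgood, g, h⟩
  push Not at hgood
  obtain ⟨p, hp, ⟨N, rfl⟩, hps⟩ := hgood
  have : NeZero (p * N) := ⟨hM.ne'⟩
  have hN : 0 < N := Nat.pos_of_mul_pos_left hM
  obtain ⟨g', hg'⟩ := (h.nsmul_of_not_dvd hp hps).exists_zmod_of_nsmul
  exact ih N (lt_mul_left hN hp.one_lt) hN hg'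

theorem isTiling_setOf {A : Finset ℤ} {S : ℕ} {g : ZMod S → ℕ}
    (h : IsMultiTiling A (Int.cast : ℤ → ZMod S) g) :
    IsTiling A {c : ℤ | g c ≠ 0} := isTiling_iff.2 fun z => by
  simpa using Finset.existsUnique_ne_zero_of_sum_eq_one (h z)

end IsMultiTiling

theorem IsTiling.isMultiTiling_zmod {A : Finset ℤ} {C : Set ℤ} (hC : IsTiling A C) {M : ℕ}
    (hM : (M : ℤ) ∈ AddAction.stabilizer ℤ C) :
    IsMultiTiling A (Int.cast : ℤ → ZMod M) ((Int.cast '' C).indicator 1) := by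
  intro z
  obtain ⟨z, rfl⟩ := ZMod.intCast_surjective z
  obtain ⟨a₀, ⟨ha₀, hc₀⟩, hu⟩ := isTiling_iff.1 hC z
  have hmem (c : ℤ) : (c : ZMod M) ∈ Int.cast '' C ↔ c ∈ C :=
    ⟨fun ⟨c', hc', he⟩ => (Int.mem_iff_of_intCast_eq hM he).1 hc', fun hc => ⟨c, hc, rfl⟩⟩
  rw [Finset.sum_eq_single_of_mem a₀ ha₀]
  · simp [← Int.cast_sub, hmem, hc₀]
  · intro a ha hne
    rw [← Int.cast_sub]
    exact Set.indicator_of_notMem (fun hc => hne (hu a ⟨ha, (hmem _).1 hc⟩)) _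

theorem exists_tiling_with_good_period (A : Finset ℤ)
    (h : ∃ C : Set ℤ, IsTiling (↑A) C) :
    ∃ (C : Set ℤ) (n : ℕ) (B : Finset ℤ),
      IsTiling (↑A) C ∧ 0 < n ∧
      (C = {c : ℤ | ∃ b ∈ B, ∃ z : ℤ, c = b + (n : ℤ) * z}) ∧
      (∀ c : ℤ, c ∈ C ↔ c + (n : ℤ) ∈ C) ∧
      (∀ m : ℕ, 0 < m → (∀ c : ℤ, c ∈ C ↔ c + (m : ℤ) ∈ C) → n ≤ m) ∧
      (∀ p : ℕ, p.Prime → p ∣ n → p ∣ A.card) := by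
  obtain ⟨C₀, hC₀⟩ := h
  obtain ⟨M, hM, hMC₀⟩ := hC₀.exists_period
  obtain ⟨S, hS, hSA, g, hg⟩ :=
    (hC₀.isMultiTiling_zmod hMC₀).exists_zmod_forall_prime_dvd_card (φ := id) hM
  set C : Set ℤ := {c : ℤ | g c ≠ 0}
  have hSC : (S : ℤ) ∈ AddAction.stabilizer ℤ C := Int.mem_stabilizer_iff.2 fun c => by simp [C]
  obtain ⟨n, hn⟩ := (AddAction.stabilizer ℤ C).exists_eq_zmultiples_natCast
  have hperiod (m : ℕ) : (∀ c : ℤ, c ∈ C ↔ c + (m : ℤ) ∈ C) ↔ n ∣ m := by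
    rw [← Int.mem_stabilizer_iff, hn, Int.mem_zmultiples_iff, Int.natCast_dvd_natCast]
  have hnS : n ∣ S := (hperiod S).1 (Int.mem_stabilizer_iff.1 hSC)
  have hn0 : 0 < n := Nat.pos_of_dvd_of_pos hnS hS
  have hnC := Int.mem_stabilizer_iff.2 ((hperiod n).2 dvd_rfl)
  obtain ⟨B, hB⟩ := Int.exists_finset_eq_setOf_add_mul hn0 hnC
  exact ⟨C, n, B, hg.isTiling_setOf, hn0, hB, Int.mem_stabilizer_iff.1 hnC,
    fun m hm hmC => Nat.le_of_dvd hm ((hperiod m).1 hmC), fun p hp hpn => hSA p hp (hpn.trans hnS)⟩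
end

section
/- Let A and B be finite sets of integers with A, B ≠ {0}, such that A ⊕ B is a complete set of residues modulo n = (#A)(#B). Then either no element of the difference set A − A is relatively prime to #B, or no element of B − B is relatively prime to #A. -/
/-! If `A ⊕ B` tiles a finite abelian group `G`, then so does `tA ⊕ B` for every `t` prime to `|A|`
(Tijdeman's multiplier theorem); it suffices to treat a prime `t = p`. In the group ring `𝔽_p[G]`
let `α`, `β`, `Γ` be the sums of the elements of `A`, `B`, `G`. Then `αβ = Γ` and `αΓ = |A|Γ`, and by
Frobenius `α^p` is the sum of the elements of `pA`, so `α^p β = α^(p-1) Γ = |A|^(p-1) Γ = Γ`. Thus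
every element of `G` is hit by `(a, b) ↦ pa + b` a number of times that is `1` modulo `p`, hence at
least once, and since `|A||B| = |G|` exactly once.

If `b₁ - b₂` were prime to `|A|` and `a₁ - a₂` prime to `|B|`, then `(b₁ - b₂)A ⊕ (a₁ - a₂)B` would
tile `ℤ/n`, yet `a₁b₁ - a₂b₂` is represented both by `(a₁, b₂)` and by `(a₂, b₁)`. -/

open Function Finset AddMonoidAlgebra

namespace AddMonoidAlgebra

variable {R G ι κ : Type*} [Semiring R] [Fintype ι] [Fintype κ]

lemma sum_single_one_mul_sum_single_one [Add G] (f : ι → G) (g : κ → G) :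
    (∑ i, single (f i) (1 : R)) * ∑ j, single (g j) 1 =
      ∑ x : ι × κ, single (f x.1 + g x.2) 1 := by
  simp only [sum_mul_sum, single_mul_single, one_mul, Fintype.sum_prod_type]

lemma single_mul_sum_single_one [AddGroup G] [Fintype G] (a : G) :
    single a (1 : R) * ∑ z, single z 1 = ∑ z, single z 1 := by
  simp only [mul_sum, single_mul_single, one_mul]
  exact (Equiv.addLeft a).bijective.sum_comp fun z => single z (1 : R)

lemma surjective_of_sum_single_one_eq [Fintype G] [Nontrivial R] {F : ι → G}
    (h : ∑ x, single (F x) (1 : R) = ∑ z, single z 1) : Surjective F := by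
  intro z
  by_contra! hz
  have := congr(($h).coeff z)
  simp [coeff_sum, coeff_single, Finsupp.finsetSum_apply, hz] at this

end AddMonoidAlgebra

section

variable {G ι κ : Type*} {f : ι → G} {g : κ → G}

theorem bijective_add_swap [AddCommMagma G] (h : Bijective fun x : ι × κ => f x.1 + g x.2) :
    Bijective fun y : κ × ι => g y.1 + f y.2 := by
  convert h.comp Prod.swap_bijective using 1
  funext y
  exact add_comm _ _

variable [AddCommGroup G] [Fintype G] [Fintype ι] [Fintype κ]

theorem bijective_prime_nsmul_add (h : Bijective fun x : ι × κ => f x.1 + g x.2)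
    {p : ℕ} [hp : Fact p.Prime] (hpι : ¬ p ∣ Fintype.card ι) :
    Bijective fun x : ι × κ => p • f x.1 + g x.2 := by
  have := charP_of_injective_algebraMap' (ZMod p) (A := (ZMod p)[G]) p
  set Γ : (ZMod p)[G] := ∑ z, single z 1
  set α : (ZMod p)[G] := ∑ i, single (f i) 1
  set c : ZMod p := Nat.cast (Fintype.card ι)
  have hαβ : α * ∑ j, single (g j) 1 = Γ := by
    rw [sum_single_one_mul_sum_single_one]
    exact h.sum_comp fun z => single z 1
  have hαΓ : α * Γ = c • Γ := by
    simp only [α, Γ, c, sum_mul, single_mul_sum_single_one, sum_const, card_univ,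
      Nat.cast_smul_eq_nsmul]
  have hpow : ∀ k, α ^ k * Γ = c ^ k • Γ := by
    intro k
    induction k with
    | zero => simp
    | succ k ih => rw [pow_succ, mul_assoc, hαΓ, mul_smul_comm, ih, smul_smul, pow_succ']
  have hc : c ^ (p - 1) = 1 :=
    ZMod.pow_card_sub_one_eq_one (by simpa [c, ZMod.natCast_eq_zero_iff] using hpι)
  have hαp : α ^ p = ∑ i, single (p • f i) 1 := by
    simp only [α, sum_pow_char, single_pow, one_pow]
  have key : ∑ x : ι × κ, single (p • f x.1 + g x.2) (1 : ZMod p) = Γ := calc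
    _ = α ^ p * ∑ j, single (g j) 1 := by rw [hαp, sum_single_one_mul_sum_single_one]
    _ = α ^ (p - 1) * (α * ∑ j, single (g j) 1) := by
      rw [← mul_assoc, ← pow_succ, Nat.sub_add_cancel hp.out.one_le]
    _ = Γ := by rw [hαβ, hpow, hc, one_smul]
  rw [Fintype.bijective_iff_surjective_and_card] at h ⊢
  exact ⟨surjective_of_sum_single_one_eq key, h.2⟩

theorem bijective_nsmul_add_of_coprime (h : Bijective fun x : ι × κ => f x.1 + g x.2) {t : ℕ}
    (ht : t.Coprime (Fintype.card ι)) : Bijective fun x : ι × κ => t • f x.1 + g x.2 := by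
  induction t using Nat.recOnMul generalizing f with
  | zero =>
    obtain ⟨i₀, hi₀⟩ := Fintype.card_eq_one_iff.1 (Nat.coprime_zero_left _ |>.1 ht)
    convert (Equiv.subRight (f i₀)).bijective.comp h using 1
    funext x
    simp [hi₀ x.1]
  | one => simpa using h
  | prime p hp =>
    have : Fact p.Prime := ⟨hp⟩
    exact bijective_prime_nsmul_add h ((Nat.Prime.coprime_iff_not_dvd hp).1 ht)
  | mul a b iha ihb =>
    rw [Nat.coprime_mul_iff_left] at ht
    simpa only [mul_nsmul] using ihb (f := fun i => a • f i) (iha h ht.1) ht.2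

theorem bijective_nsmul_add_nsmul_of_coprime (h : Bijective fun x : ι × κ => f x.1 + g x.2)
    {s t : ℕ} (hs : s.Coprime (Fintype.card ι)) (ht : t.Coprime (Fintype.card κ)) :
    Bijective fun x : ι × κ => s • f x.1 + t • g x.2 := by
  have hs' := bijective_add_swap (f := fun i => s • f i) (bijective_nsmul_add_of_coprime h hs)
  exact bijective_add_swap (f := fun j => t • g j) (g := fun i => s • f i)
    (bijective_nsmul_add_of_coprime (g := fun i => s • f i) hs' ht)

end

lemma ZMod.exists_coprime_natCast_eq_intCast {m n : ℕ} [NeZero n] (hmn : m ∣ n) {e : ℤ}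
    (he : IsCoprime e m) : ∃ t : ℕ, t.Coprime m ∧ (t : ZMod n) = e := by
  refine ⟨(e : ZMod n).val, ?_, ZMod.natCast_zmod_val _⟩
  rw [← ZMod.isUnit_iff_coprime, ZMod.natCast_val, ZMod.cast_intCast hmn]
  exact (ZMod.unitOfIsCoprime e he).isUnit

lemma bijective_add_of_existsUnique {A B : Finset ℤ} {n : ℕ}
    (h : ∀ z : ZMod n, ∃! p : ℤ × ℤ, p.1 ∈ A ∧ p.2 ∈ B ∧ ((p.1 + p.2 : ℤ) : ZMod n) = z) :
    Bijective fun x : A × B => ((x.1 : ℤ) : ZMod n) + (x.2 : ℤ) := by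
  refine (bijective_iff_existsUnique _).2 fun z => ?_
  obtain ⟨⟨a, b⟩, ⟨ha, hb, hz⟩, huniq⟩ := h z
  refine ⟨(⟨a, ha⟩, ⟨b, hb⟩), by simpa using hz, ?_⟩
  rintro ⟨⟨a', ha'⟩, ⟨b', hb'⟩⟩ hz'
  obtain ⟨rfl, rfl⟩ := Prod.ext_iff.1 (huniq (a', b') ⟨ha', hb', by simpa using hz'⟩)
  rfl

theorem difference_set_lemma_general (A B : Finset ℤ)
    (n : ℕ) (hn : n = A.card * B.card)
    (hcomplete : ∀ z : ZMod n,
      ∃! p : ℤ × ℤ, p.1 ∈ A ∧ p.2 ∈ B ∧ ((p.1 + p.2 : ℤ) : ZMod n) = z) :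
    (∀ a₁ ∈ A, ∀ a₂ ∈ A, a₁ ≠ a₂ → ¬ IsCoprime (a₁ - a₂) (B.card : ℤ)) ∨
    (∀ b₁ ∈ B, ∀ b₂ ∈ B, b₁ ≠ b₂ → ¬ IsCoprime (b₁ - b₂) (A.card : ℤ)) := by
  by_contra! ⟨⟨a₁, ha₁, a₂, ha₂, ha, hda⟩, ⟨b₁, hb₁, b₂, hb₂, -, hdb⟩⟩
  have : NeZero n :=
    ⟨hn ▸ mul_ne_zero (card_ne_zero_of_mem ha₁) (card_ne_zero_of_mem hb₁)⟩
  obtain ⟨s, hs, hse⟩ := ZMod.exists_coprime_natCast_eq_intCast (hn ▸ dvd_mul_right _ _) hdb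
  obtain ⟨t, ht, htd⟩ := ZMod.exists_coprime_natCast_eq_intCast (hn ▸ dvd_mul_left _ _) hda
  have hst := bijective_nsmul_add_nsmul_of_coprime (f := fun a : A => ((a : ℤ) : ZMod n))
    (g := fun b : B => ((b : ℤ) : ZMod n)) (bijective_add_of_existsUnique hcomplete)
    (by simpa using hs) (by simpa using ht)
  -- both sides are `a₁ b₁ - a₂ b₂`
  have hcollide := @hst.1 (⟨a₁, ha₁⟩, ⟨b₂, hb₂⟩) (⟨a₂, ha₂⟩, ⟨b₁, hb₁⟩) (by
    simp only [nsmul_eq_mul, hse, htd]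
    push_cast
    ring)
  exact ha congr($hcollide.1.1)

theorem difference_set_lemma (A B : Finset ℤ)
    (hA : A ≠ {0}) (hB : B ≠ {0})
    (n : ℕ) (hn : n = A.card * B.card)
    (hcomplete : ∀ z : ZMod n,
      ∃! p : ℤ × ℤ, p.1 ∈ A ∧ p.2 ∈ B ∧ ((p.1 + p.2 : ℤ) : ZMod n) = z) :
    (∀ a₁ ∈ A, ∀ a₂ ∈ A, a₁ ≠ a₂ → ¬ IsCoprime (a₁ - a₂) (B.card : ℤ)) ∨
    (∀ b₁ ∈ B, ∀ b₂ ∈ B, b₁ ≠ b₂ → ¬ IsCoprime (b₁ - b₂) (A.card : ℤ)) :=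
  difference_set_lemma_general A B n hn hcomplete
end

section
/- Let A(x) and B(x) be polynomials with nonnegative integer coefficients, n = A(1)·B(1), and p a prime not dividing A(1). If A(x)·B(x) ≡ 1 + x + ⋯ + x^{n−1} (mod x^n − 1), then A(x^p)·B(x) ≡ 1 + x + ⋯ + x^{n−1} (mod x^n − 1). -/
/-!
Modulo `p`, Frobenius turns `A(x^p)` into `A(x)^p`, and `A(x)^(p-1)·(1 + ⋯ + x^(n-1))` is
congruent to `A(1)^(p-1)·(1 + ⋯ + x^(n-1)) = 1 + ⋯ + x^(n-1)` modulo `x^n - 1` by Fermat.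
Hence `A(x^p)B(x) ≡ A(x)^(p-1)·A(x)B(x) ≡ 1 + ⋯ + x^(n-1)` modulo `(p, x^n - 1)`. Reducing the
exponents of `A(x^p)B(x)` modulo `n` gives a representative with nonnegative coefficients, all
`≡ 1 (mod p)` and hence at least `1`; since they sum to `A(1)B(1) = n`, they all equal `1`.
-/

open Polynomial Finset

namespace Polynomial

section Semiring

variable {R : Type*} [Semiring R]

noncomputable def foldExponents (n : ℕ) (f : R[X]) : R[X] :=
  ∑ i ∈ f.support, monomial (i % n) (f.coeff i)

theorem coeff_foldExponents (n : ℕ) (f : R[X]) (j : ℕ) :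
    (foldExponents n f).coeff j = ∑ i ∈ f.support with i % n = j, f.coeff i := by
  simp only [foldExponents, finsetSum_coeff, coeff_monomial, sum_filter]

theorem natDegree_foldExponents_lt {n : ℕ} (hn : 0 < n) (f : R[X]) :
    (foldExponents n f).natDegree < n := by
  have hle : (foldExponents n f).natDegree ≤ n - 1 :=
    natDegree_sum_le_of_forall_le _ _ fun i _ =>
      (natDegree_monomial_le _).trans (Nat.le_sub_one_of_lt (Nat.mod_lt i hn))
  omega

theorem natDegree_geom_sum_X_lt {n : ℕ} (hn : 0 < n) :
    (∑ i ∈ range n, (X : R[X]) ^ i).natDegree < n := by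
  have hle : (∑ i ∈ range n, (X : R[X]) ^ i).natDegree ≤ n - 1 :=
    natDegree_sum_le_of_forall_le _ _ fun i hi =>
      (natDegree_X_pow_le i).trans (Nat.le_sub_one_of_lt (mem_range.1 hi))
  omega

end Semiring

theorem coeff_foldExponents_nonneg {R : Type*} [Semiring R] [PartialOrder R]
    [IsOrderedAddMonoid R] {f : R[X]} (hf : ∀ i, 0 ≤ f.coeff i) (n j : ℕ) :
    0 ≤ (foldExponents n f).coeff j := by
  rw [coeff_foldExponents]
  exact sum_nonneg fun i _ => hf i

theorem coeff_mul_nonneg {R : Type*} [Semiring R] [PartialOrder R] [IsOrderedRing R]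
    {f g : R[X]} (hf : ∀ i, 0 ≤ f.coeff i) (hg : ∀ i, 0 ≤ g.coeff i) (k : ℕ) :
    0 ≤ (f * g).coeff k := by
  rw [coeff_mul]
  exact sum_nonneg fun x _ => mul_nonneg (hf x.1) (hg x.2)

theorem coeff_expand_nonneg {R : Type*} [CommSemiring R] [Preorder R] {f : R[X]}
    (hf : ∀ i, 0 ≤ f.coeff i) {p : ℕ} (hp : 0 < p) (k : ℕ) :
    0 ≤ (expand R p f).coeff k := by
  rw [coeff_expand hp]
  split_ifs
  exacts [hf _, le_rfl]

section CommRing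

variable {R : Type*} [CommRing R]

theorem X_pow_sub_one_dvd_X_pow_sub_X_pow_mod (n i : ℕ) :
    (X ^ n - 1 : R[X]) ∣ X ^ i - X ^ (i % n) := by
  have h : (X : R[X]) ^ i - X ^ (i % n) = ((X ^ n) ^ (i / n) - 1 ^ (i / n)) * X ^ (i % n) := by
    rw [one_pow, sub_mul, one_mul, ← pow_mul, ← pow_add, Nat.div_add_mod]
  rw [h]
  exact (sub_dvd_pow_sub_pow _ _ _).mul_right _

theorem X_pow_sub_one_dvd_sub_foldExponents (n : ℕ) (f : R[X]) :
    (X ^ n - 1 : R[X]) ∣ f - foldExponents n f := by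
  suffices h : (X ^ n - 1 : R[X]) ∣
      ∑ i ∈ f.support, (monomial i (f.coeff i) - monomial (i % n) (f.coeff i)) by
    rwa [sum_sub_distrib, ← as_sum_support] at h
  refine dvd_sum fun i _ => ?_
  rw [← C_mul_X_pow_eq_monomial, ← C_mul_X_pow_eq_monomial, ← mul_sub]
  exact (X_pow_sub_one_dvd_X_pow_sub_X_pow_mod n i).mul_left _

theorem X_pow_sub_one_dvd_mul_geom_sum_sub (n : ℕ) (g : R[X]) :
    (X ^ n - 1 : R[X]) ∣
      g * ∑ i ∈ range n, X ^ i - C (g.eval 1) * ∑ i ∈ range n, X ^ i := by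
  obtain ⟨q, hq⟩ := X_sub_C_dvd_sub_C_eval (p := g) (a := 1)
  refine ⟨q, ?_⟩
  rw [← sub_mul, hq, ← mul_geom_sum, C_1]
  ring

theorem eq_of_X_pow_sub_one_dvd_sub [Nontrivial R] {n : ℕ} (hn : 0 < n) {f g : R[X]}
    (hf : f.natDegree < n) (hg : g.natDegree < n) (h : (X ^ n - 1 : R[X]) ∣ f - g) : f = g := by
  have hmonic : (X ^ n - C 1 : R[X]).Monic := monic_X_pow_sub_C 1 hn.ne'
  have hdeg : (X ^ n - C 1 : R[X]).degree = n := degree_X_pow_sub_C hn 1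
  have hreduced {r : R[X]} (hr : r.natDegree < n) : r %ₘ (X ^ n - C 1) = r :=
    (modByMonic_eq_self_iff hmonic).2 (hdeg ▸ degree_le_natDegree.trans_lt (by exact_mod_cast hr))
  rw [← hreduced hf, ← hreduced hg]
  exact modByMonic_eq_of_dvd_sub hmonic (by rwa [C_1])

end CommRing

theorem X_pow_sub_one_dvd_expand_card_mul_sub_geom_sum {K : Type*} [Field K] [Fintype K]
    {n : ℕ} {A B : K[X]} (hA : A.eval 1 ≠ 0)
    (h : (X ^ n - 1 : K[X]) ∣ A * B - ∑ i ∈ range n, X ^ i) :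
    (X ^ n - 1 : K[X]) ∣ expand K (Fintype.card K) A * B - ∑ i ∈ range n, X ^ i := by
  set q := Fintype.card K
  have hfermat : C ((A ^ (q - 1)).eval 1) = 1 := by
    rw [eval_pow, FiniteField.pow_card_sub_one_eq_one _ hA, C_1]
  have hsplit : expand K q A * B - ∑ i ∈ range n, X ^ i =
      A ^ (q - 1) * (A * B - ∑ i ∈ range n, X ^ i) +
        (A ^ (q - 1) * ∑ i ∈ range n, X ^ i - C ((A ^ (q - 1)).eval 1) * ∑ i ∈ range n, X ^ i) := by
    rw [FiniteField.expand_card, hfermat, ← pow_sub_one_mul Fintype.card_ne_zero A]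
    ring
  rw [hsplit]
  exact dvd_add (h.mul_left _) (X_pow_sub_one_dvd_mul_geom_sum_sub n _)

theorem eq_geom_sum_X_of_coeff_pos {n : ℕ} {g : ℤ[X]} (hg : g.natDegree < n)
    (hpos : ∀ i < n, 0 < g.coeff i) (hg1 : g.eval 1 = n) : g = ∑ i ∈ range n, X ^ i := by
  have hsum : ∑ i ∈ range n, (1 : ℤ) = ∑ i ∈ range n, g.coeff i := by
    simpa [eval_eq_sum_range' hg] using hg1.symm
  have hone : ∀ i < n, g.coeff i = 1 := fun i hi =>
    ((sum_eq_sum_iff_of_le fun j hj => hpos j (mem_range.1 hj)).1 hsum i (mem_range.2 hi)).symm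
  ext i
  simp only [finsetSum_coeff, coeff_X_pow, sum_ite_eq, mem_range]
  split_ifs with hi
  · exact hone i hi
  · exact coeff_eq_zero_of_natDegree_lt (by omega)

theorem X_pow_sub_one_dvd_sub_geom_sum_of_dvd_map {R : Type*} [CommRing R] [Nontrivial R]
    {n : ℕ} (hn : 0 < n) {f : ℤ[X]} (hf : ∀ i, 0 ≤ f.coeff i) (hf1 : f.eval 1 = n)
    (h : (X ^ n - 1 : R[X]) ∣ f.map (Int.castRingHom R) - ∑ i ∈ range n, X ^ i) :
    (X ^ n - 1 : ℤ[X]) ∣ f - ∑ i ∈ range n, X ^ i := by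
  have hg_deg := natDegree_foldExponents_lt hn f
  have hg_nonneg := coeff_foldExponents_nonneg hf n
  have hfg := X_pow_sub_one_dvd_sub_foldExponents n f
  generalize foldExponents n f = g at hg_deg hg_nonneg hfg
  have hg_map : g.map (Int.castRingHom R) = ∑ i ∈ range n, X ^ i := by
    refine eq_of_X_pow_sub_one_dvd_sub hn (natDegree_map_le.trans_lt hg_deg)
      (natDegree_geom_sum_X_lt hn) ?_
    have hfg' : (X ^ n - 1 : R[X]) ∣ (f - g).map (Int.castRingHom R) := by
      simpa using Polynomial.map_dvd (Int.castRingHom R) hfg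
    convert dvd_sub h hfg' using 1
    rw [Polynomial.map_sub]
    ring
  have hpos : ∀ i < n, 0 < g.coeff i := fun i hi => by
    refine (hg_nonneg i).lt_of_ne' fun h0 => ?_
    have := congrArg (coeff · i) hg_map
    simp [coeff_map, h0, finsetSum_coeff, coeff_X_pow, hi] at this
  have hg1 : g.eval 1 = n := by
    have := eval_dvd (x := (1 : ℤ)) hfg
    simp only [eval_sub, eval_pow, eval_X, eval_one, one_pow, sub_self, zero_dvd_iff] at this
    linarith
  rw [← eq_geom_sum_X_of_coeff_pos hg_deg hpos hg1]
  exact hfg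

end Polynomial

theorem tijdeman_poly (A B : Polynomial ℤ)
    (hA : ∀ i : ℕ, 0 ≤ A.coeff i) (hB : ∀ i : ℕ, 0 ≤ B.coeff i)
    (n : ℕ) (hn : (n : ℤ) = A.eval 1 * B.eval 1)
    (p : ℕ) (hp : p.Prime) (hpA : ¬ (p : ℤ) ∣ A.eval 1)
    (h : (X ^ n - 1 : Polynomial ℤ) ∣ (A * B - ∑ i ∈ Finset.range n, X ^ i)) :
    (X ^ n - 1 : Polynomial ℤ) ∣ (A.comp (X ^ p) * B - ∑ i ∈ Finset.range n, X ^ i) := by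
  rcases Nat.eq_zero_or_pos n with rfl | hn0
  · simp only [pow_zero, sub_self, zero_dvd_iff, range_zero, sum_empty, sub_zero,
      mul_eq_zero] at h ⊢
    exact h.imp (fun hA0 => by rw [hA0, zero_comp]) id
  have : Fact p.Prime := ⟨hp⟩
  have hA1 : (A.map (Int.castRingHom (ZMod p))).eval 1 ≠ 0 := by
    rwa [eval_one_map, eq_intCast, ne_eq, ZMod.intCast_zmod_eq_zero_iff_dvd]
  rw [← expand_eq_comp_X_pow]
  refine X_pow_sub_one_dvd_sub_geom_sum_of_dvd_map (R := ZMod p) hn0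
    (coeff_mul_nonneg (coeff_expand_nonneg hA hp.pos) hB) (by simp [hn]) ?_
  have key := X_pow_sub_one_dvd_expand_card_mul_sub_geom_sum hA1
    (by simpa only [Polynomial.map_sub, Polynomial.map_mul, Polynomial.map_pow, map_X,
      Polynomial.map_one, Polynomial.map_sum] using Polynomial.map_dvd (Int.castRingHom (ZMod p)) h)
  rw [ZMod.card p] at key
  rwa [Polynomial.map_mul, map_expand]
end

section
/- Suppose A ⊕ C = ℤ is a tiling with A a finite set of nonnegative integers, k > 1, and C ⊆ kℤ. For i = 0,…,k−1 let A_i = {a ∈ A : a ≡ i (mod k)}. Then each A_i is nonempty, each (A_i − a_i)/k ⊕ C/k = ℤ is a tiling (where a_i = min A_i), and the elements of A are equally distributed modulo k: #A_i = (#A)/k for all i. -/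
/-- Tiling of ℤ by a finite set of nonnegative integers with translation set `C`. -/
def IsTilingN (A : Finset ℕ) (C : Set ℤ) : Prop :=
  ∀ z : ℤ, ∃! p : ℕ × ℤ, p.1 ∈ A ∧ p.2 ∈ C ∧ (p.1 : ℤ) + p.2 = z

/-!
Since `C ⊆ kℤ`, the representation `a + c` of an integer `z` has `a ≡ z (mod k)`; so the class
`A_i` with `C` tiles `i + kℤ`, and subtracting `a_i` and dividing by `k` turns this into the
tiling `(A_i - a_i)/k ⊕ C/k = ℤ`. These tilings all use the translation set `C/k`, and a finite
tile is as large as the inverse density of its translation set, so all the `A_i` have the same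
size.
-/

theorem Nat.add_mul_sub_div_of_mod_eq {a m k : ℕ} (hle : m ≤ a) (hmod : a % k = m % k) :
    m + k * ((a - m) / k) = a := by
  rw [Nat.mul_div_cancel' ((Nat.modEq_iff_dvd' hle).1 hmod.symm)]
  omega

theorem Int.modEq_of_add_eq_of_dvd {n a c z : ℤ} (hc : n ∣ c) (he : a + c = z) :
    a ≡ z [ZMOD n] :=
  Int.modEq_iff_dvd.2 (by rwa [← he, add_sub_cancel_left])

namespace Finset

variable {A : Finset ℕ} {k i m : ℕ}

theorem add_mul_sub_div_of_mem_filter_mod (hm : m ∈ A.filter fun a => a % k = i)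
    (hmin : ∀ a ∈ A.filter fun a => a % k = i, m ≤ a) {a : ℕ}
    (ha : a ∈ A.filter fun a => a % k = i) : m + k * ((a - m) / k) = a :=
  Nat.add_mul_sub_div_of_mod_eq (hmin a ha) ((mem_filter.1 ha).2.trans (mem_filter.1 hm).2.symm)

theorem card_image_sub_div_filter_mod (hm : m ∈ A.filter fun a => a % k = i)
    (hmin : ∀ a ∈ A.filter fun a => a % k = i, m ≤ a) :
    ((A.filter fun a => a % k = i).image fun a => (a - m) / k).card =
      (A.filter fun a => a % k = i).card := by
  refine card_image_of_injOn fun a ha a' ha' heq => ?_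
  rw [← add_mul_sub_div_of_mem_filter_mod hm hmin ha,
    ← add_mul_sub_div_of_mem_filter_mod hm hmin ha', heq]

end Finset

noncomputable def translatesBelow (C : Set ℤ) (N : ℕ) : Finset ℕ := by
  classical exact (Finset.range N).filter fun n => (n : ℤ) ∈ C

theorem mem_translatesBelow {C : Set ℤ} {N n : ℕ} :
    n ∈ translatesBelow C N ↔ n < N ∧ (n : ℤ) ∈ C := by
  classical
  simp [translatesBelow]

namespace IsTilingN

variable {A : Finset ℕ} {C : Set ℤ}

theorem unique (h : IsTilingN A C) {a a' : ℕ} {c c' : ℤ} (ha : a ∈ A) (hc : c ∈ C)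
    (ha' : a' ∈ A) (hc' : c' ∈ C) (heq : (a : ℤ) + c = a' + c') : a = a' ∧ c = c' :=
  Prod.mk.inj ((h _).unique ⟨ha, hc, heq⟩ ⟨ha', hc', rfl⟩)

theorem card_mul_card_translatesBelow_le (h : IsTilingN A C) {M : ℕ} (hM : ∀ a ∈ A, a ≤ M)
    (N : ℕ) : A.card * (translatesBelow C N).card ≤ N + M := by
  rw [← Finset.card_product, ← Finset.card_range (N + M)]
  refine Finset.card_le_card_of_injOn (fun p => p.1 + p.2) ?_ ?_
  · rintro ⟨a, n⟩ hp
    simp only [Finset.coe_product, Set.mem_prod, Finset.mem_coe, mem_translatesBelow] at hp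
    simp only [Finset.coe_range, Set.mem_Iio]
    linarith [hM a hp.1]
  · rintro ⟨a, n⟩ hp ⟨a', n'⟩ hp' heq
    simp only [Finset.coe_product, Set.mem_prod, Finset.mem_coe, mem_translatesBelow] at hp hp'
    obtain ⟨rfl, hn⟩ := h.unique hp.1 hp.2.2 hp'.1 hp'.2.2 (by exact_mod_cast heq)
    rw [Nat.cast_inj.1 hn]

theorem le_card_mul_card_translatesBelow (h : IsTilingN A C) {M : ℕ} (hM : ∀ a ∈ A, a ≤ M)
    (N : ℕ) : N ≤ A.card * (translatesBelow C N).card + M := by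
  have hcover : Finset.Ico M N ⊆ (A ×ˢ translatesBelow C N).image fun p => p.1 + p.2 := by
    intro z hz
    rw [Finset.mem_Ico] at hz
    obtain ⟨⟨a, c⟩, ⟨ha, hc, he⟩, -⟩ := h z
    dsimp only at ha hc he
    have hc0 : 0 ≤ c := by linarith [hM a ha, (by exact_mod_cast hz.1 : (M : ℤ) ≤ z)]
    lift c to ℕ using hc0
    refine Finset.mem_image.2 ⟨(a, c), Finset.mem_product.2 ⟨ha, ?_⟩, by exact_mod_cast he⟩
    exact mem_translatesBelow.2 ⟨by omega, hc⟩
  have := (Finset.card_le_card hcover).trans Finset.card_image_le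
  rw [Nat.card_Ico, Finset.card_product] at this
  omega

/-- By the two bounds above, `#(translatesBelow C N) = N / #A + O(1)`, so `#A` is determined by
`C`. -/
theorem card_le_card {A' : Finset ℕ} (h : IsTilingN A C) (h' : IsTilingN A' C) :
    A'.card ≤ A.card := by
  set M := max (A.sup id) (A'.sup id)
  have hM : ∀ a ∈ A, a ≤ M := fun a ha => le_max_of_le_left (Finset.le_sup (f := id) ha)
  have hM' : ∀ a ∈ A', a ≤ M := fun a ha => le_max_of_le_right (Finset.le_sup (f := id) ha)
  by_contra! hlt
  set N := 2 * A.card * M + M + 1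
  set t := (translatesBelow C N).card
  have hlow : N ≤ A.card * t + M := h.le_card_mul_card_translatesBelow hM N
  have hup : A'.card * t ≤ N + M := h'.card_mul_card_translatesBelow_le hM' N
  have ht : t ≤ 2 * M := by
    have : (A.card + 1) * t ≤ A'.card * t := Nat.mul_le_mul_right t hlt
    nlinarith
  have : A.card * t ≤ 2 * A.card * M := by
    rw [mul_comm 2, mul_assoc]; exact Nat.mul_le_mul_left _ ht
  omega

theorem card_eq_card {A' : Finset ℕ} (h : IsTilingN A C) (h' : IsTilingN A' C) :
    A.card = A'.card :=
  le_antisymm (h'.card_le_card h) (h.card_le_card h')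

variable {k : ℕ}

theorem filter_mod_nonempty (hC : ∀ c ∈ C, (k : ℤ) ∣ c) (h : IsTilingN A C) {i : ℕ}
    (hi : i < k) : (A.filter fun a => a % k = i).Nonempty := by
  obtain ⟨⟨a, c⟩, ⟨ha, hc, he⟩, -⟩ := h i
  have hmod : a ≡ i [MOD k] := Int.natCast_modEq_iff.1 (Int.modEq_of_add_eq_of_dvd (hC c hc) he)
  exact ⟨a, Finset.mem_filter.2 ⟨ha, Eq.trans hmod (Nat.mod_eq_of_lt hi)⟩⟩

theorem image_sub_div_filter_mod (hk : 0 < k) (hC : ∀ c ∈ C, (k : ℤ) ∣ c) (h : IsTilingN A C)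
    {i m : ℕ} (hm : m ∈ A.filter fun a => a % k = i)
    (hmin : ∀ a ∈ A.filter fun a => a % k = i, m ≤ a) :
    IsTilingN ((A.filter fun a => a % k = i).image fun a => (a - m) / k)
      {z : ℤ | (k : ℤ) * z ∈ C} := by
  have hk' : (k : ℤ) ≠ 0 := by exact_mod_cast hk.ne'
  have hscale : ∀ a ∈ A.filter fun a => a % k = i, (m : ℤ) + k * ((a - m) / k : ℕ) = a :=
    fun a ha => by exact_mod_cast Finset.add_mul_sub_div_of_mem_filter_mod hm hmin ha
  intro z
  obtain ⟨⟨a, c⟩, ⟨ha, hc, he⟩, -⟩ := h (k * z + m)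
  dsimp only at ha hc he
  have haf : a ∈ A.filter fun a => a % k = i := by
    have hmod : (a : ℤ) ≡ m [ZMOD k] :=
      (Int.modEq_of_add_eq_of_dvd (hC c hc) he).trans (by simp [Int.ModEq])
    exact Finset.mem_filter.2
      ⟨ha, Eq.trans (Int.natCast_modEq_iff.1 hmod) (Finset.mem_filter.1 hm).2⟩
  obtain ⟨e, rfl⟩ := hC c hc
  refine ⟨((a - m) / k, e), ⟨Finset.mem_image_of_mem _ haf, hc, ?_⟩, ?_⟩
  · refine mul_left_cancel₀ hk' ?_
    linear_combination he + hscale a haf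
  · rintro ⟨b, f⟩ ⟨hb, hf, hbf⟩
    obtain ⟨a', ha', rfl⟩ := Finset.mem_image.1 hb
    obtain ⟨rfl, hfe⟩ := h.unique (Finset.mem_filter.1 ha').1 hf ha hc
      (by linear_combination k * hbf - hscale a' ha' - he)
    dsimp only at hfe
    rw [mul_left_cancel₀ hk' hfe]

end IsTilingN

theorem tiling_with_C_in_kZ (A : Finset ℕ) (C : Set ℤ) (k : ℕ) (hk : 1 < k)
    (hC : ∀ c ∈ C, (k : ℤ) ∣ c) (h : IsTilingN A C) :
    ∀ i : ℕ, i < k →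
      (A.filter fun a => a % k = i).Nonempty ∧
      (∃ m ∈ A.filter fun a => a % k = i,
        (∀ a ∈ A.filter fun a => a % k = i, m ≤ a) ∧
        IsTilingN ((A.filter fun a => a % k = i).image fun a => (a - m) / k)
          {z : ℤ | (k : ℤ) * z ∈ C}) ∧
      k * (A.filter fun a => a % k = i).card = A.card := by
  have hk0 : 0 < k := by omega
  have hquot : ∀ i < k, ∃ m ∈ A.filter (fun a => a % k = i),
      (∀ a ∈ A.filter fun a => a % k = i, m ≤ a) ∧
      IsTilingN ((A.filter fun a => a % k = i).image fun a => (a - m) / k)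
        {z : ℤ | (k : ℤ) * z ∈ C} := fun i hi =>
    have hne := h.filter_mod_nonempty hC hi
    ⟨_, Finset.min'_mem _ hne, fun a ha => Finset.min'_le _ a ha,
      h.image_sub_div_filter_mod hk0 hC (Finset.min'_mem _ hne) fun a ha => Finset.min'_le _ a ha⟩
  have hcard : ∀ i < k,
      (A.filter fun a => a % k = i).card = (A.filter fun a => a % k = 0).card := by
    intro i hi
    obtain ⟨m, hm, hmin, hT⟩ := hquot i hi
    obtain ⟨m₀, hm₀, hmin₀, hT₀⟩ := hquot 0 hk0
    rw [← Finset.card_image_sub_div_filter_mod hm hmin,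
      ← Finset.card_image_sub_div_filter_mod hm₀ hmin₀, hT.card_eq_card hT₀]
  intro i hi
  refine ⟨h.filter_mod_nonempty hC hi, hquot i hi, ?_⟩
  have hsum : A.card = ∑ r ∈ Finset.range k, (A.filter fun a => a % k = r).card :=
    Finset.card_eq_sum_card_fiberwise fun a _ => Finset.mem_range.2 (Nat.mod_lt a hk0)
  rw [hsum, Finset.sum_congr rfl fun r hr => hcard r (Finset.mem_range.1 hr), hcard i hi,
    Finset.sum_const, Finset.card_range, smul_eq_mul]
end
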